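/- arXiv:2405.01194 — 6 statements merged into one kernel-verified Lean document; each statement's English description precedes it below -/
import Mathlib

section
/- Let p ∈ (0,∞), v ∈ S^{n-1}, and let K_t be a parallel chord movement of a convex body K ⊂ R^n along direction v with speed function β. Then for any fixed x ∈ R^n, the map t ↦ h_{p,K_t}(x) is convex in t; in particular, (1/2) h_{p,K_{t_1}}(x) + (1/2) h_{p,K_{t_2}}(x) ≥ h_{p,K_{(t_1+t_2)/2}}(x) for all t_1, t_2 ∈ R. -/
open MeasureTheory Real Set
open scoped Pointwise RealInnerProductSpace ENNReal NNReal

noncomputable section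

/-- `hp p K y` is the `L_p` support function `(1/p) log ∫_K e^{p⟨x,y⟩} dx/|K|`. -/
def hp {n : ℕ} (p : ℝ) (K : Set (EuclideanSpace ℝ (Fin n))) (y : EuclideanSpace ℝ (Fin n)) : ℝ :=
  (1 / p) * Real.log ((∫ x in K, Real.exp (p * ⟪x, y⟫)) / (volume K).toReal)

/-- The gauge of the `L_p` polar body. -/
def polarNorm {n : ℕ} (p : ℝ) (K : Set (EuclideanSpace ℝ (Fin n)))
    (y : EuclideanSpace ℝ (Fin n)) : ℝ :=
  ((1 / (Nat.factorial (n - 1) : ℝ)) *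
      ∫ r in Set.Ioi (0 : ℝ), r ^ (n - 1) * Real.exp (-(hp p K (r • y)))) ^ (-(1 / (n : ℝ)))

/-- The `L_p` polar body `K^{o,p}`. -/
def polarBody {n : ℕ} (p : ℝ) (K : Set (EuclideanSpace ℝ (Fin n))) :
    Set (EuclideanSpace ℝ (Fin n)) :=
  {y | polarNorm p K y ≤ 1}

/-- The classical polar body. -/
def polar {n : ℕ} (K : Set (EuclideanSpace ℝ (Fin n))) : Set (EuclideanSpace ℝ (Fin n)) :=
  {y | ∀ x ∈ K, ⟪y, x⟫ ≤ 1}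

/-- The parallel chord movement `K_t = {x + β(x|v^⊥) t v : x ∈ K}` of `K` along `v`. -/
def pcm {n : ℕ} (K : Set (EuclideanSpace ℝ (Fin n))) (β : EuclideanSpace ℝ (Fin n) → ℝ)
    (v : EuclideanSpace ℝ (Fin n)) (t : ℝ) : Set (EuclideanSpace ℝ (Fin n)) :=
  (fun x => x + (β (x - ⟪x, v⟫ • v) * t) • v) '' K

/-- The hslice `{x' ∈ v^⊥ : x' + s v ∈ A}` of a set `A`. -/
def hslice {n : ℕ} (v : EuclideanSpace ℝ (Fin n)) (s : ℝ)
    (A : Set (EuclideanSpace ℝ (Fin n))) : Set (EuclideanSpace ℝ (Fin n)) :=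
  {x | ⟪x, v⟫ = 0 ∧ x + s • v ∈ A}

/-- The barycenter of a set. -/
def bar {n : ℕ} (A : Set (EuclideanSpace ℝ (Fin n))) : EuclideanSpace ℝ (Fin n) :=
  ((volume A).toReal)⁻¹ • ∫ x in A, x


lemma measurePreserving_shear {n : ℕ} (v : EuclideanSpace ℝ (Fin (n+1)))
    (b : OrthonormalBasis (Fin (n+1)) ℝ (EuclideanSpace ℝ (Fin (n+1)))) (hb0 : b 0 = v)
    (g : EuclideanSpace ℝ (Fin (n+1)) → ℝ) (hg : Measurable g)
    (hginv : ∀ (y : EuclideanSpace ℝ (Fin (n+1))) (r : ℝ), g (y + r • v) = g y) :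
    MeasurePreserving (fun y : EuclideanSpace ℝ (Fin (n+1)) => y + g y • v) volume volume := by
  classical
  let e := b.repr
  let P := (MeasurableEquiv.toLp 2 (Fin (n+1) → ℝ)).symm
  let C := MeasurableEquiv.piFinSuccAbove (fun _ : Fin (n+1) => ℝ) 0
  let H : (Fin n → ℝ) → ℝ := fun u => g (e.symm (P.symm (C.symm (0, u))))
  let F : ℝ × (Fin n → ℝ) → ℝ × (Fin n → ℝ) := fun q => (q.1 + H q.2, q.2)
  have hev : e v = EuclideanSpace.single 0 1 := by rw [← hb0]; exact b.repr_self 0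
  -- forward computation of the conjugated map
  have hrepr : ∀ (c : ℝ) (z : EuclideanSpace ℝ (Fin (n+1))), C (P (e (z + c • v)))
      = ((e z) 0 + c, fun j => (e z) ((0 : Fin (n+1)).succAbove j)) := by
    intro c z
    have h1 : e (z + c • v) = e z + c • EuclideanSpace.single 0 1 := by
      rw [e.map_add, e.map_smul, hev]
    rw [h1]
    refine Prod.ext ?_ ?_
    · simp [C, P, Fin.removeNth, MeasurableEquiv.coe_toLp_symm,
        MeasurableEquiv.toLp_symm_apply, PiLp.add_apply, PiLp.smul_apply,
        EuclideanSpace.single_apply]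
    · funext j
      simp [C, P, Fin.removeNth, Fin.tail, MeasurableEquiv.coe_toLp_symm,
        MeasurableEquiv.toLp_symm_apply, PiLp.add_apply, PiLp.smul_apply,
        EuclideanSpace.single_apply, Fin.succ_ne_zero]
  have hC0 : ∀ z : EuclideanSpace ℝ (Fin (n+1)), C (P (e z))
      = ((e z) 0, fun j => (e z) ((0 : Fin (n+1)).succAbove j)) := by
    intro z
    have := hrepr 0 z
    simpa using this
  -- H computes g
  have hH : ∀ y : EuclideanSpace ℝ (Fin (n+1)),
      H (fun j => (e y) ((0 : Fin (n+1)).succAbove j)) = g y := by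
    intro y
    have h2 : C (P (e (y + (-((e y) 0)) • v)))
        = ((0 : ℝ), fun j => (e y) ((0 : Fin (n+1)).succAbove j)) := by
      rw [hrepr]
      refine Prod.ext (by simp) rfl
    have h3 : e.symm (P.symm (C.symm ((0 : ℝ), fun j => (e y) ((0 : Fin (n+1)).succAbove j))))
        = y + (-((e y) 0)) • v := by
      rw [← h2, MeasurableEquiv.symm_apply_apply, MeasurableEquiv.symm_apply_apply,
        LinearIsometryEquiv.symm_apply_apply]
    show g _ = g y
    rw [h3, hginv]
  -- the function equals the conjugated skew product
  have hkey : (fun y : EuclideanSpace ℝ (Fin (n+1)) => y + g y • v)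
      = (⇑e.symm ∘ ⇑P.symm ∘ ⇑C.symm ∘ F ∘ ⇑C ∘ ⇑P ∘ ⇑e) := by
    funext y
    simp only [Function.comp_apply]
    have h4 : F (C (P (e y))) = C (P (e (y + g y • v))) := by
      rw [hC0, hrepr]
      refine Prod.ext ?_ rfl
      show (e y) 0 + H _ = (e y) 0 + g y
      rw [hH]
    rw [h4, MeasurableEquiv.symm_apply_apply, MeasurableEquiv.symm_apply_apply,
      LinearIsometryEquiv.symm_apply_apply]
  -- measure preservation of each piece
  have hHm : Measurable H :=
    hg.comp (e.symm.continuous.measurable.comp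
      (P.symm.measurable.comp (C.symm.measurable.comp measurable_prodMk_left)))
  have hskew : MeasurePreserving (fun q : (Fin n → ℝ) × ℝ => (q.1, q.2 + H q.1))
      ((volume : Measure (Fin n → ℝ)).prod (volume : Measure ℝ))
      ((volume : Measure (Fin n → ℝ)).prod (volume : Measure ℝ)) :=
    MeasurePreserving.skew_product (g := fun (a : Fin n → ℝ) (c : ℝ) => c + H a) (MeasurePreserving.id volume)
      (measurable_snd.add (hHm.comp measurable_fst))
      (Filter.Eventually.of_forall fun a => (measurePreserving_add_right volume (H a)).map_eq)
  have hF : MeasurePreserving F volume volume := by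
    have hFeq : F = Prod.swap ∘ (fun q : (Fin n → ℝ) × ℝ => (q.1, q.2 + H q.1)) ∘ Prod.swap := rfl
    rw [hFeq, Measure.volume_eq_prod]
    exact Measure.measurePreserving_swap.comp (hskew.comp Measure.measurePreserving_swap)
  have he := b.measurePreserving_repr
  have he' := b.measurePreserving_repr_symm
  have hP := EuclideanSpace.volume_preserving_symm_measurableEquiv_toLp (Fin (n+1))
  have hP' := hP.symm P
  have hC := volume_preserving_piFinSuccAbove (fun _ : Fin (n+1) => ℝ) 0
  have hC' := hC.symm C
  rw [hkey]
  exact he'.comp (hP'.comp (hC'.comp (hF.comp (hC.comp (hP.comp he)))))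

lemma convexOn_log_integral_exp {α : Type*} [MeasurableSpace α] (ν : Measure α) (a b : α → ℝ)
    (hi : ∀ t : ℝ, Integrable (fun y => Real.exp (a y + b y * t)) ν)
    (hpos : ∀ t : ℝ, 0 < ∫ y, Real.exp (a y + b y * t) ∂ν) :
    ConvexOn ℝ Set.univ fun t => Real.log (∫ y, Real.exp (a y + b y * t) ∂ν) := by
  refine ⟨convex_univ, fun s _ t _ lam mu hlam hmu hsum => ?_⟩
  rcases eq_or_lt_of_le hlam with h0 | hlam'
  · obtain rfl : mu = 1 := by linarith
    simp [← h0, smul_eq_mul]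
  rcases eq_or_lt_of_le hmu with h0 | hmu'
  · obtain rfl : lam = 1 := by linarith
    simp [← h0, smul_eq_mul]
  have hlam1 : lam < 1 := by linarith
  have hmu1 : mu < 1 := by linarith
  simp only [smul_eq_mul]
  set u : ℝ := lam * s + mu * t with hu
  set A : ℝ := ∫ y, Real.exp (a y + b y * s) ∂ν with hA
  set B : ℝ := ∫ y, Real.exp (a y + b y * t) ∂ν with hB
  set Cc : ℝ := ∫ y, Real.exp (a y + b y * u) ∂ν with hC
  have hApos := hpos s; have hBpos := hpos t; have hCpos := hpos u
  rw [← hA, ← hB, ← hC] at *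
  -- Hölder
  have hq : Real.HolderConjugate (1/lam) (1/mu) := by
    rw [Real.holderConjugate_iff]
    constructor
    · rw [lt_div_iff₀ hlam']; linarith
    · rw [one_div, inv_inv, one_div, inv_inv]; linarith
  have hfm : AEMeasurable (fun y => ENNReal.ofReal (Real.exp (a y + b y * s)) ^ lam) ν :=
    ((hi s).aemeasurable.ennreal_ofReal).pow_const _
  have hgm : AEMeasurable (fun y => ENNReal.ofReal (Real.exp (a y + b y * t)) ^ mu) ν :=
    ((hi t).aemeasurable.ennreal_ofReal).pow_const _
  have key := ENNReal.lintegral_mul_le_Lp_mul_Lq ν hq hfm hgm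
  -- simplify the three lintegrals
  have hprod : ∀ y, (ENNReal.ofReal (Real.exp (a y + b y * s)) ^ lam
      * ENNReal.ofReal (Real.exp (a y + b y * t)) ^ mu)
      = ENNReal.ofReal (Real.exp (a y + b y * u)) := by
    intro y
    have hexp : (a y + b y * s) * lam + (a y + b y * t) * mu = a y + b y * u := by
      linear_combination a y * hsum - b y * hu
    rw [ENNReal.ofReal_rpow_of_pos (exp_pos _), ENNReal.ofReal_rpow_of_pos (exp_pos _),
      ← ENNReal.ofReal_mul (by positivity), ← Real.exp_mul, ← Real.exp_mul, ← Real.exp_add, hexp]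
  have hL : ∀ r : ℝ, ∫⁻ y, ENNReal.ofReal (Real.exp (a y + b y * r)) ∂ν
      = ENNReal.ofReal (∫ y, Real.exp (a y + b y * r) ∂ν) := fun r =>
    (MeasureTheory.ofReal_integral_eq_lintegral_ofReal (hi r)
      (Filter.Eventually.of_forall fun y => (exp_pos _).le)).symm
  have keyL : ∫⁻ y, ((fun y => ENNReal.ofReal (Real.exp (a y + b y * s)) ^ lam)
      * fun y => ENNReal.ofReal (Real.exp (a y + b y * t)) ^ mu) y ∂ν = ENNReal.ofReal Cc := by
    rw [hC, ← hL u]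
    exact lintegral_congr fun y => hprod y
  have keyR1 : (∫⁻ y, (ENNReal.ofReal (Real.exp (a y + b y * s)) ^ lam) ^ (1/lam) ∂ν) ^ (1/(1/lam))
      = ENNReal.ofReal A ^ lam := by
    rw [one_div_one_div]
    congr 1
    · rw [hA, ← hL s]
      refine lintegral_congr fun y => ?_
      rw [← ENNReal.rpow_mul, mul_one_div_cancel hlam'.ne', ENNReal.rpow_one]
  have keyR2 : (∫⁻ y, (ENNReal.ofReal (Real.exp (a y + b y * t)) ^ mu) ^ (1/mu) ∂ν) ^ (1/(1/mu))
      = ENNReal.ofReal B ^ mu := by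
    rw [one_div_one_div]
    congr 1
    · rw [hB, ← hL t]
      refine lintegral_congr fun y => ?_
      rw [← ENNReal.rpow_mul, mul_one_div_cancel hmu'.ne', ENNReal.rpow_one]
  rw [keyL, keyR1, keyR2] at key
  have key2 : ENNReal.ofReal Cc ≤ ENNReal.ofReal (A ^ lam * B ^ mu) := by
    rwa [ENNReal.ofReal_mul (by positivity), ← ENNReal.ofReal_rpow_of_pos hApos,
      ← ENNReal.ofReal_rpow_of_pos hBpos]
  have hCle : Cc ≤ A ^ lam * B ^ mu := by
    rwa [ENNReal.ofReal_le_ofReal_iff (by positivity)] at key2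
  calc Real.log Cc ≤ Real.log (A ^ lam * B ^ mu) := Real.log_le_log hCpos hCle
    _ = lam * Real.log A + mu * Real.log B := by
        rw [Real.log_mul (by positivity) (by positivity), Real.log_rpow hApos,
          Real.log_rpow hBpos]

theorem stmt2 {n : ℕ} (p : ℝ) (hp' : 0 < p) (v : EuclideanSpace ℝ (Fin n)) (hv : ‖v‖ = 1)
    (K : Set (EuclideanSpace ℝ (Fin n)))
    (hKcomp : IsCompact K) (hKconv : Convex ℝ K) (hKint : (interior K).Nonempty)
    (β : EuclideanSpace ℝ (Fin n) → ℝ) (hβ : Continuous β)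
    (hconv : ∀ t : ℝ, Convex ℝ (pcm K β v t))
    (x : EuclideanSpace ℝ (Fin n)) :
    ConvexOn ℝ Set.univ (fun t => hp p (pcm K β v t) x) ∧
      ∀ t₁ t₂ : ℝ,
        hp p (pcm K β v ((t₁ + t₂) / 2)) x ≤
          (1 / 2) * hp p (pcm K β v t₁) x + (1 / 2) * hp p (pcm K β v t₂) x := by
  classical
  obtain ⟨m, rfl⟩ : ∃ m, n = m + 1 := by
    cases n with
    | zero =>
      exfalso
      have hv0 : v = 0 := Subsingleton.elim v 0
      rw [hv0] at hv; simp at hv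
    | succ m => exact ⟨m, rfl⟩
  have hvv : ⟪v, v⟫ = (1 : ℝ) := by
    rw [real_inner_self_eq_norm_mul_norm, hv]; norm_num
  obtain ⟨b, hb0⟩ : ∃ b : OrthonormalBasis (Fin (m+1)) ℝ (EuclideanSpace ℝ (Fin (m+1))),
      b 0 = v := by
    have card : Module.finrank ℝ (EuclideanSpace ℝ (Fin (m+1))) = Fintype.card (Fin (m+1)) := by
      simp
    have horth : Orthonormal ℝ (Set.restrict {(0 : Fin (m+1))} (fun _ => v)) := by
      constructor
      · intro i; exact hv
      · intro i j hij
        exact absurd (Subtype.ext (by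
          have hi := i.2; have hj := j.2
          simp only [Set.mem_singleton_iff] at hi hj
          rw [hi, hj])) hij
    obtain ⟨b, hb⟩ := horth.exists_orthonormalBasis_extension_of_card_eq card
    exact ⟨b, hb 0 rfl⟩
  -- projection and continuity facts
  have hinner : Continuous fun y : EuclideanSpace ℝ (Fin (m+1)) => (⟪y, v⟫ : ℝ) :=
    continuous_id.inner continuous_const
  have hπcont : Continuous fun y : EuclideanSpace ℝ (Fin (m+1)) => y - ⟪y, v⟫ • v :=
    continuous_id.sub (hinner.smul continuous_const)
  have hπv : ∀ (y : EuclideanSpace ℝ (Fin (m+1))) (r : ℝ),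
      (y + r • v) - ⟪y + r • v, v⟫ • v = y - ⟪y, v⟫ • v := by
    intro y r
    rw [inner_add_left, real_inner_smul_left, hvv, mul_one]
    module
  -- the exponent data
  have hKvol : 0 < volume K :=
    lt_of_lt_of_le (isOpen_interior.measure_pos volume hKint) (measure_mono interior_subset)
  set V : ℝ := (volume K).toReal with hV
  have hVpos : 0 < V := ENNReal.toReal_pos hKvol.ne' hKcomp.measure_lt_top.ne
  set A : EuclideanSpace ℝ (Fin (m+1)) → ℝ := fun y => p * ⟪y, x⟫ with hA
  set Bf : EuclideanSpace ℝ (Fin (m+1)) → ℝ :=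
    fun y => p * (β (y - ⟪y, v⟫ • v) * ⟪v, x⟫) with hBf
  have hABcont : ∀ t : ℝ, Continuous fun y => Real.exp (A y + Bf y * t) := by
    intro t
    apply Real.continuous_exp.comp
    apply Continuous.add
    · exact continuous_const.mul (continuous_id.inner continuous_const)
    · exact (continuous_const.mul ((hβ.comp hπcont).mul continuous_const)).mul continuous_const
  have hI : ∀ t : ℝ, Integrable (fun y => Real.exp (A y + Bf y * t)) (volume.restrict K) :=
    fun t => ((hABcont t).continuousOn).integrableOn_compact hKcomp
  have hIpos : ∀ t : ℝ, 0 < ∫ y, Real.exp (A y + Bf y * t) ∂(volume.restrict K) := by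
    intro t
    refine (setIntegral_pos_iff_support_of_nonneg_ae
      (Filter.Eventually.of_forall fun y => (exp_pos _).le) (hI t)).mpr ?_
    have hsupp : Function.support (fun y => Real.exp (A y + Bf y * t)) = Set.univ := by
      ext y; simp [(exp_pos _).ne']
    rw [hsupp, Set.univ_inter]
    exact hKvol
  -- change of variables for each t
  have hcov : ∀ t : ℝ,
      (∫ z in pcm K β v t, Real.exp (p * ⟪z, x⟫))
        = ∫ y, Real.exp (A y + Bf y * t) ∂(volume.restrict K)
      ∧ volume (pcm K β v t) = volume K := by
    intro t
    set g : EuclideanSpace ℝ (Fin (m+1)) → ℝ := fun y => β (y - ⟪y, v⟫ • v) * t with hg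
    set φ : EuclideanSpace ℝ (Fin (m+1)) → EuclideanSpace ℝ (Fin (m+1)) :=
      fun y => y + g y • v with hφ
    have hginv : ∀ (y : EuclideanSpace ℝ (Fin (m+1))) (r : ℝ), g (y + r • v) = g y := by
      intro y r; simp only [g]; rw [hπv]
    have hgc : Continuous g := (hβ.comp hπcont).mul continuous_const
    have hmp : MeasurePreserving φ volume volume :=
      measurePreserving_shear v b hb0 g hgc.measurable hginv
    set ψ : EuclideanSpace ℝ (Fin (m+1)) → EuclideanSpace ℝ (Fin (m+1)) :=
      fun z => z - g z • v with hψ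
    have hli : Function.LeftInverse ψ φ := by
      intro y
      simp only [ψ, φ]
      rw [hginv y (g y)]
      abel
    have hri : Function.RightInverse ψ φ := by
      intro z
      simp only [ψ, φ]
      have : z - g z • v = z + (-(g z)) • v := by module
      rw [this, hginv z (-(g z))]
      module
    have hψc : Continuous ψ := continuous_id.sub (hgc.smul continuous_const)
    have hφc : Continuous φ := continuous_id.add (hgc.smul continuous_const)
    let homeo : Homeomorph (EuclideanSpace ℝ (Fin (m+1))) (EuclideanSpace ℝ (Fin (m+1))) :=
      { toEquiv := ⟨φ, ψ, hli, hri⟩, continuous_toFun := hφc, continuous_invFun := hψc }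
    have hemb : MeasurableEmbedding φ := homeo.measurableEmbedding
    have himg : pcm K β v t = φ '' K := rfl
    constructor
    · rw [himg, hmp.setIntegral_image_emb hemb]
      refine integral_congr_ae (Filter.Eventually.of_forall fun y => ?_)
      dsimp only
      have harg : p * ⟪y + g y • v, x⟫ = A y + Bf y * t := by
        simp only [g, A, Bf]
        rw [inner_add_left, real_inner_smul_left]
        ring
      rw [hφ]
      dsimp only
      rw [harg]
    · rw [himg]
      have h1 := hemb.map_apply volume (φ '' K)
      rw [hmp.map_eq] at h1
      rw [h1, Set.preimage_image_eq K hli.injective]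
  have heq : (fun t => hp p (pcm K β v t) x)
      = fun t => (1/p) * (Real.log (∫ y, Real.exp (A y + Bf y * t) ∂(volume.restrict K))
          - Real.log V) := by
    funext t
    obtain ⟨h1, h2⟩ := hcov t
    simp only [hp]
    rw [h1, h2, ← hV, Real.log_div (hIpos t).ne' hVpos.ne']
  have hlog := convexOn_log_integral_exp (volume.restrict K) A Bf hI hIpos
  have hmain : ConvexOn ℝ Set.univ (fun t => hp p (pcm K β v t) x) := by
    rw [heq]
    have h1 : ConvexOn ℝ Set.univ (fun t =>
        Real.log (∫ y, Real.exp (A y + Bf y * t) ∂(volume.restrict K)) - Real.log V) :=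
      hlog.sub (concaveOn_const _ convex_univ)
    have h2 := h1.smul (le_of_lt (by positivity : (0:ℝ) < 1/p))
    simpa [smul_eq_mul] using h2
  refine ⟨hmain, fun t₁ t₂ => ?_⟩
  have h2 := hmain.2 (Set.mem_univ t₁) (Set.mem_univ t₂)
    (by norm_num : (0:ℝ) ≤ 1/2) (by norm_num : (0:ℝ) ≤ 1/2) (by norm_num)
  have e1 : (1/2 : ℝ) • t₁ + (1/2 : ℝ) • t₂ = (t₁ + t₂)/2 := by
    simp only [smul_eq_mul]; ring
  rw [e1] at h2
  simpa [smul_eq_mul] using h2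
end
end

section
/- Let p ∈ (0,∞), v ∈ S^{n-1}, and let K_t be a parallel chord movement of a convex body K along v. Then for all x', y' ∈ v^⊥, s, t_1, t_2 ∈ R and a, b, c > 0 with 2/a = 1/b + 1/c, one has (c/(b+c)) h_{p,K_{t_1}}(b x' + b s v) + (b/(b+c)) h_{p,K_{t_2}}(c y' + c s v) ≥ h_{p,K_{(t_1+t_2)/2}}( a(x'+y')/2 + a s v ). -/
open MeasureTheory Real Set
open scoped Pointwise RealInnerProductSpace ENNReal NNReal

noncomputable section

/-!
The body `K_t` is the image of `K` under the shear `x ↦ x + β(x|v^⊥) t v`, which translates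
every line parallel to `v` and therefore preserves Lebesgue measure. Hence `h_{p,K_t}(y)` is
`(1/p) log` of the mean over `K` of `exp (p ⟪x + β(x|v^⊥) t v, y⟫)`. For the three vectors in
the statement, the exponent at time `(t₁ + t₂)/2` is the convex combination, with weights
`c/(b+c)` and `b/(b+c)`, of the exponents at times `t₁` and `t₂`: both weighted components along
`v` equal `bc/(b+c) = a/2`. Hölder's inequality, in the form of log-convexity of
`f ↦ log ∫ exp f`, concludes.
-/

open Measure

section Holder

variable {α : Type*} [MeasurableSpace α] {μ : Measure α} {u w : α → ℝ} {a b : ℝ}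

theorem MeasureTheory.Integrable.rpow_mul_rpow (hu0 : 0 ≤ᵐ[μ] u) (hw0 : 0 ≤ᵐ[μ] w)
    (hu : Integrable u μ) (hw : Integrable w μ) (ha : 0 ≤ a) (hb : 0 ≤ b) (hab : a + b = 1) :
    Integrable (fun x => u x ^ a * w x ^ b) μ := by
  refine ((hu.const_mul a).add (hw.const_mul b)).mono'
    ((hu.aemeasurable.pow_const a).mul (hw.aemeasurable.pow_const b)).aestronglyMeasurable ?_
  filter_upwards [hu0, hw0] with x hux hwx
  rw [norm_of_nonneg (mul_nonneg (rpow_nonneg hux a) (rpow_nonneg hwx b))]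
  exact geom_mean_le_arith_mean2_weighted ha hb hux hwx hab

theorem MeasureTheory.integral_rpow_mul_rpow_le (hu0 : 0 ≤ᵐ[μ] u) (hw0 : 0 ≤ᵐ[μ] w)
    (hu : Integrable u μ) (hw : Integrable w μ) (ha : 0 ≤ a) (hb : 0 ≤ b) (hab : a + b = 1) :
    ∫ x, u x ^ a * w x ^ b ∂μ ≤ (∫ x, u x ∂μ) ^ a * (∫ x, w x ∂μ) ^ b := by
  have hnonneg : 0 ≤ᵐ[μ] fun x => u x ^ a * w x ^ b := by
    filter_upwards [hu0, hw0] with x hux hwx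
    exact mul_nonneg (rpow_nonneg hux a) (rpow_nonneg hwx b)
  have hofReal : (fun x => ENNReal.ofReal (u x ^ a * w x ^ b)) =ᵐ[μ]
      fun x => ENNReal.ofReal (u x) ^ a * ENNReal.ofReal (w x) ^ b := by
    filter_upwards [hu0, hw0] with x hux hwx
    rw [ENNReal.ofReal_mul (rpow_nonneg hux a), ENNReal.ofReal_rpow_of_nonneg hux ha,
      ENNReal.ofReal_rpow_of_nonneg hwx hb]
  rw [integral_eq_lintegral_of_nonneg_ae hnonneg
      (hu.rpow_mul_rpow hu0 hw0 hw ha hb hab).aestronglyMeasurable,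
    integral_eq_lintegral_of_nonneg_ae hu0 hu.1, integral_eq_lintegral_of_nonneg_ae hw0 hw.1,
    ENNReal.toReal_rpow, ENNReal.toReal_rpow, ← ENNReal.toReal_mul, lintegral_congr_ae hofReal]
  refine ENNReal.toReal_mono ?_ (ENNReal.lintegral_mul_norm_pow_le
    hu.aemeasurable.ennreal_ofReal hw.aemeasurable.ennreal_ofReal ha hb hab)
  exact ENNReal.mul_ne_top (ENNReal.rpow_ne_top_of_nonneg ha hu.lintegral_lt_top.ne)
    (ENNReal.rpow_ne_top_of_nonneg hb hw.lintegral_lt_top.ne)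

theorem MeasureTheory.log_integral_exp_add_div_le [IsFiniteMeasure μ] {f g : α → ℝ}
    (hf : Integrable (fun x => exp (f x)) μ) (hg : Integrable (fun x => exp (g x)) μ)
    (ha : 0 ≤ a) (hb : 0 ≤ b) (hab : a + b = 1) :
    log ((∫ x, exp (a * f x + b * g x) ∂μ) / μ.real Set.univ) ≤
      a * log ((∫ x, exp (f x) ∂μ) / μ.real Set.univ) +
        b * log ((∫ x, exp (g x) ∂μ) / μ.real Set.univ) := by
  rcases eq_zero_or_neZero μ with rfl | _
  · simp
  have hV : 0 < μ.real Set.univ := measureReal_univ_pos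
  have hI_f := integral_exp_pos hf
  have hI_g := integral_exp_pos hg
  have hexp (x : α) : exp (a * f x + b * g x) = exp (f x) ^ a * exp (g x) ^ b := by
    rw [← exp_mul, ← exp_mul, ← exp_add, mul_comm (f x), mul_comm (g x)]
  have hf0 : 0 ≤ᵐ[μ] fun x => exp (f x) := ae_of_all _ fun x => (exp_pos (f x)).le
  have hg0 : 0 ≤ᵐ[μ] fun x => exp (g x) := ae_of_all _ fun x => (exp_pos (g x)).le
  have hI_pos : 0 < ∫ x, exp (a * f x + b * g x) ∂μ :=
    integral_exp_pos (by simpa only [hexp] using hf.rpow_mul_rpow hf0 hg0 hg ha hb hab)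
  have hholder : log (∫ x, exp (a * f x + b * g x) ∂μ) ≤
      a * log (∫ x, exp (f x) ∂μ) + b * log (∫ x, exp (g x) ∂μ) := by
    rw [← log_rpow hI_f, ← log_rpow hI_g,
      ← log_mul (rpow_pos_of_pos hI_f a).ne' (rpow_pos_of_pos hI_g b).ne']
    refine log_le_log hI_pos ?_
    simpa only [hexp] using integral_rpow_mul_rpow_le hf0 hg0 hf hg ha hb hab
  rw [log_div hI_pos.ne' hV.ne', log_div hI_f.ne' hV.ne', log_div hI_g.ne' hV.ne']
  linear_combination hholder + log (μ.real Set.univ) * hab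

end Holder

section Shear

variable {E : Type*} [NormedAddCommGroup E]

theorem MeasureTheory.measurePreserving_prod_skew_add {α G : Type*} [MeasurableSpace α]
    [MeasurableSpace G] [AddGroup G] [MeasurableAdd₂ G] {μ : Measure α} {ν : Measure G}
    [SFinite μ] [SFinite ν] [ν.IsAddRightInvariant] {g : α → G} (hg : Measurable g) :
    MeasurePreserving (fun q : α × G => (q.1, q.2 + g q.1)) (μ.prod ν) (μ.prod ν) :=
  (MeasurePreserving.id μ).skew_product (measurable_snd.add (hg.comp measurable_fst))
    (ae_of_all _ fun a => (measurePreserving_add_right ν (g a)).map_eq)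

theorem exists_continuousLinearEquiv_prod_apply_eq [NormedSpace ℝ E] [FiniteDimensional ℝ E]
    {v : E} (hv : v ≠ 0) : ∃ (k : ℕ) (L : E ≃L[ℝ] (Fin k → ℝ) × ℝ), L v = (0, 1) := by
  have : Nontrivial E := nontrivial_iff.2 ⟨v, 0, hv⟩
  have hdim : Module.finrank ℝ ((Fin (Module.finrank ℝ E - 1) → ℝ) × ℝ) =
      Module.finrank ℝ E := by
    simpa using Nat.sub_add_cancel Module.finrank_pos
  let L₀ := (ContinuousLinearEquiv.ofFinrankEq hdim).symm
  obtain ⟨M, hM⟩ : ∃ M : _ ≃L[ℝ] _, M (L₀ v) = (0, 1) :=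
    SeparatingDual.exists_continuousLinearEquiv_apply_eq (by simpa using hv) (by simp)
  exact ⟨_, L₀.trans M, hM⟩

theorem MeasureTheory.measurePreserving_add_smul_of_invariant [NormedSpace ℝ E]
    [FiniteDimensional ℝ E] [MeasurableSpace E] [BorelSpace E] (μ : Measure E)
    [μ.IsAddHaarMeasure] {v : E} {φ : E → ℝ} (hφ : Measurable φ)
    (hinv : ∀ x (c : ℝ), φ (x + c • v) = φ x) :
    MeasurePreserving (fun x => x + φ x • v) μ μ := by
  rcases eq_or_ne v 0 with rfl | hv
  · simp only [smul_zero, add_zero]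
    exact MeasurePreserving.id μ
  obtain ⟨k, L, hL⟩ := exists_continuousLinearEquiv_prod_apply_eq hv
  have hL_symm (q : (Fin k → ℝ) × ℝ) : L.symm q = L.symm (q.1, 0) + q.2 • v := by
    rw [← L.symm_apply_apply v, hL, ← L.symm.map_smul, ← L.symm.map_add]
    simp
  -- in the coordinates given by `L`, the shear only moves the last coordinate
  let g : (Fin k → ℝ) → ℝ := fun y => φ (L.symm (y, 0))
  have hconj : (fun x => x + φ x • v) = L.symm ∘ (fun q => (q.1, q.2 + g q.1)) ∘ L := by
    funext x
    have hφx : φ x = g (L x).1 := by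
      conv_lhs => rw [← L.symm_apply_apply x, hL_symm, hinv]
    rw [Function.comp_apply, Function.comp_apply, L.eq_symm_apply, map_add, map_smul, hL, hφx]
    ext <;> simp
  have hLμ : map L μ = addHaarScalarFactor (map L μ) (volume.prod volume) • volume.prod volume :=
    isAddLeftInvariant_eq_smul _ _
  have hL_mp : MeasurePreserving L μ (map L μ) := ⟨L.continuous.measurable, rfl⟩
  have hL_symm_mp : MeasurePreserving L.symm (map L μ) μ :=
    ⟨L.symm.continuous.measurable, by
      rw [map_map L.symm.continuous.measurable L.continuous.measurable]; simp⟩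
  have hskew : MeasurePreserving (fun q => (q.1, q.2 + g q.1)) (map L μ) (map L μ) := by
    rw [hLμ]
    exact (measurePreserving_prod_skew_add
      (hφ.comp (L.symm.continuous.measurable.comp measurable_prodMk_right))).smul_measure _
  rw [hconj]
  exact hL_symm_mp.comp (hskew.comp hL_mp)

theorem add_smul_injective_of_invariant {R M : Type*} [Ring R] [AddCommGroup M] [Module R M]
    {v : M} {φ : M → R} (hinv : ∀ x (c : R), φ (x + c • v) = φ x) : Function.Injective (fun x => x + φ x • v) := by
  intro x y (hxy : x + φ x • v = y + φ y • v)
  have hy : y = x + (φ x - φ y) • v := by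
    rw [sub_smul, ← add_sub_assoc, hxy, add_sub_cancel_right]
  have hφ : φ y = φ x := by rw [hy, hinv]
  simpa [hφ] using hxy

end Shear

section ParallelChordMovement

variable {E : Type*} [NormedAddCommGroup E] [InnerProductSpace ℝ E]

def pcmMap (β : E → ℝ) (v : E) (t : ℝ) (x : E) : E :=
  x + (β (x - ⟪x, v⟫ • v) * t) • v

theorem pcmMap_invariant {v : E} (hv : ‖v‖ = 1) (β : E → ℝ) (t : ℝ) (x : E) (c : ℝ) :
    β (x + c • v - ⟪x + c • v, v⟫ • v) * t = β (x - ⟪x, v⟫ • v) * t := by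
  congr 2
  rw [inner_add_left, real_inner_smul_left, inner_self_eq_one_of_norm_eq_one hv, mul_one,
    add_smul]
  abel

theorem continuous_pcmMap {β : E → ℝ} (hβ : Continuous β) (v : E) (t : ℝ) :
    Continuous (pcmMap β v t) := by
  unfold pcmMap
  fun_prop

theorem measurePreserving_pcmMap [FiniteDimensional ℝ E] [MeasurableSpace E] [BorelSpace E]
    (μ : Measure E) [μ.IsAddHaarMeasure] {v : E} (hv : ‖v‖ = 1) {β : E → ℝ}
    (hβ : Measurable β) (t : ℝ) : MeasurePreserving (pcmMap β v t) μ μ := by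
  refine measurePreserving_add_smul_of_invariant μ ?_ (pcmMap_invariant hv β t)
  exact (hβ.comp (by fun_prop)).mul_const t

theorem measurableEmbedding_pcmMap [FiniteDimensional ℝ E] [MeasurableSpace E] [BorelSpace E]
    {v : E} (hv : ‖v‖ = 1) {β : E → ℝ} (hβ : Continuous β) (t : ℝ) :
    MeasurableEmbedding (pcmMap β v t) :=
  (continuous_pcmMap hβ v t).measurable.measurableEmbedding
    (add_smul_injective_of_invariant (pcmMap_invariant hv β t))

theorem inner_pcmMap (β : E → ℝ) (v : E) (t : ℝ) (x y : E) :
    ⟪pcmMap β v t x, y⟫ = ⟪x, y⟫ + β (x - ⟪x, v⟫ • v) * t * ⟪y, v⟫ := by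
  rw [pcmMap, inner_add_left, real_inner_smul_left, real_inner_comm v y]

end ParallelChordMovement

theorem pcm_eq_image {n : ℕ} (K : Set (EuclideanSpace ℝ (Fin n)))
    (β : EuclideanSpace ℝ (Fin n) → ℝ) (v : EuclideanSpace ℝ (Fin n)) (t : ℝ) :
    pcm K β v t = pcmMap β v t '' K :=
  rfl

theorem hp_pcm {n : ℕ} (p : ℝ) {v : EuclideanSpace ℝ (Fin n)} (hv : ‖v‖ = 1)
    (K : Set (EuclideanSpace ℝ (Fin n))) {β : EuclideanSpace ℝ (Fin n) → ℝ}
    (hβ : Continuous β) (t : ℝ) (y : EuclideanSpace ℝ (Fin n)) :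
    hp p (pcm K β v t) y = 1 / p * log ((∫ x in K, exp (p * ⟪pcmMap β v t x, y⟫)) /
      (volume.restrict K).real Set.univ) := by
  have hT := measurePreserving_pcmMap volume hv hβ.measurable t
  have hTe := measurableEmbedding_pcmMap hv hβ t
  have hvol : volume.real (pcmMap β v t '' K) = volume.real K := by
    simpa using hT.setIntegral_image_emb hTe (fun _ => (1 : ℝ)) K
  rw [hp, pcm_eq_image, measureReal_restrict_apply_univ, ← measureReal_def, hvol,
    hT.setIntegral_image_emb hTe]

theorem div_two_eq_of_two_div_eq_add {a b c : ℝ} (hb : 0 < b) (hc : 0 < c)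
    (habc : 2 / a = 1 / b + 1 / c) : a / 2 = b * c / (b + c) := by
  have ha : a ≠ 0 := by
    rintro rfl
    rw [div_zero] at habc
    linarith [one_div_pos.2 hb, one_div_pos.2 hc]
  field_simp at habc ⊢
  linarith

theorem stmt3_general {n : ℕ} (p : ℝ) (hp' : 0 < p) (v : EuclideanSpace ℝ (Fin n)) (hv : ‖v‖ = 1)
    (K : Set (EuclideanSpace ℝ (Fin n)))
    (hKcomp : IsCompact K)
    (β : EuclideanSpace ℝ (Fin n) → ℝ) (hβ : Continuous β)
    (x' y' : EuclideanSpace ℝ (Fin n)) (hx' : ⟪x', v⟫ = 0) (hy' : ⟪y', v⟫ = 0)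
    (s t₁ t₂ a b c : ℝ) (hb : 0 < b) (hc : 0 < c)
    (habc : 2 / a = 1 / b + 1 / c) :
    hp p (pcm K β v ((t₁ + t₂) / 2)) (a • ((1 / 2 : ℝ) • (x' + y')) + (a * s) • v) ≤
      (c / (b + c)) * hp p (pcm K β v t₁) (b • x' + (b * s) • v) +
        (b / (b + c)) * hp p (pcm K β v t₂) (c • y' + (c * s) • v) := by
  have ha := div_two_eq_of_two_div_eq_add hb hc habc
  have hweights : c / (b + c) + b / (b + c) = 1 := by field_simp; ring
  have hexponent (x : EuclideanSpace ℝ (Fin n)) :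
      p * ⟪pcmMap β v ((t₁ + t₂) / 2) x, a • ((1 / 2 : ℝ) • (x' + y')) + (a * s) • v⟫ =
        c / (b + c) * (p * ⟪pcmMap β v t₁ x, b • x' + (b * s) • v⟫) +
          b / (b + c) * (p * ⟪pcmMap β v t₂ x, c • y' + (c * s) • v⟫) := by
    simp only [inner_pcmMap, inner_add_right, real_inner_smul_right, hx', hy',
      inner_self_eq_one_of_norm_eq_one hv]
    linear_combination p * (⟪x, x'⟫ + ⟪x, y'⟫ + 2 * s * ⟪x, v⟫ +
      β (x - ⟪x, v⟫ • v) * s * (t₁ + t₂)) * ha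
  have : IsFiniteMeasure (volume.restrict K) := isFiniteMeasure_restrict.2 hKcomp.measure_lt_top.ne
  have hint (t : ℝ) (y : EuclideanSpace ℝ (Fin n)) :
      IntegrableOn (fun x => exp (p * ⟪pcmMap β v t x, y⟫)) K :=
    (continuous_exp.comp (continuous_const.mul ((continuous_pcmMap hβ v t).inner
      continuous_const))).continuousOn.integrableOn_compact hKcomp
  simp only [hp_pcm p hv K hβ, hexponent]
  calc _ ≤ 1 / p * (c / (b + c) * log _ + b / (b + c) * log _) :=
        mul_le_mul_of_nonneg_left (log_integral_exp_add_div_le (hint _ _) (hint _ _)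
          (by positivity) (by positivity) hweights) (by positivity)
    _ = _ := by ring

theorem stmt3 {n : ℕ} (p : ℝ) (hp' : 0 < p) (v : EuclideanSpace ℝ (Fin n)) (hv : ‖v‖ = 1)
    (K : Set (EuclideanSpace ℝ (Fin n)))
    (hKcomp : IsCompact K) (hKconv : Convex ℝ K) (hKint : (interior K).Nonempty)
    (β : EuclideanSpace ℝ (Fin n) → ℝ) (hβ : Continuous β)
    (hconv : ∀ t : ℝ, Convex ℝ (pcm K β v t))
    (x' y' : EuclideanSpace ℝ (Fin n)) (hx' : ⟪x', v⟫ = 0) (hy' : ⟪y', v⟫ = 0)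
    (s t₁ t₂ a b c : ℝ) (ha : 0 < a) (hb : 0 < b) (hc : 0 < c)
    (habc : 2 / a = 1 / b + 1 / c) :
    hp p (pcm K β v ((t₁ + t₂) / 2)) (a • ((1 / 2 : ℝ) • (x' + y')) + (a * s) • v) ≤
      (c / (b + c)) * hp p (pcm K β v t₁) (b • x' + (b * s) • v) +
        (b / (b + c)) * hp p (pcm K β v t₂) (c • y' + (c * s) • v) :=
  stmt3_general p hp' v hv K hKcomp β hβ x' y' hx' hy' s t₁ t₂ a b c hb hc habc
end
end

section
/- The function t ↦ (1/(pst)) (e^{pstm} − e^{−pstm}) = (2/(pst)) sinh(pstm) is log-convex on (0,∞), for any fixed p, s > 0 and m ≥ 0. -/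
open MeasureTheory Real Set
open scoped Pointwise RealInnerProductSpace ENNReal NNReal

noncomputable section

lemma aux_convex : ConvexOn ℝ (Ioi (0:ℝ)) (fun u => Real.log (Real.sinh u) - Real.log u) := by
  have hint : interior (Ioi (0:ℝ)) = Ioi 0 := interior_Ioi
  apply convexOn_of_hasDerivWithinAt2_nonneg (f' := fun u => Real.cosh u / Real.sinh u - u⁻¹)
    (f'' := fun u => (Real.sinh u * Real.sinh u - Real.cosh u * Real.cosh u) / (Real.sinh u)^2
      + (u^2)⁻¹) (convex_Ioi 0)
  · exact (Real.continuous_sinh.continuousOn.log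
      (fun x hx => (Real.sinh_pos_iff.2 hx).ne')).sub
      (Real.continuousOn_log.mono (by intro x hx; exact (ne_of_gt hx)))
  · intro x hx
    rw [hint] at hx
    have hxp : (0:ℝ) < x := hx
    have hs : Real.sinh x ≠ 0 := (Real.sinh_pos_iff.2 hxp).ne'
    exact (((Real.hasDerivAt_sinh x).log hs).sub (Real.hasDerivAt_log hxp.ne')).hasDerivWithinAt
  · intro x hx
    rw [hint] at hx
    have hxp : (0:ℝ) < x := hx
    have hs : Real.sinh x ≠ 0 := (Real.sinh_pos_iff.2 hxp).ne'
    have h1 : HasDerivAt (fun u => Real.cosh u / Real.sinh u)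
        ((Real.sinh x * Real.sinh x - Real.cosh x * Real.cosh x) / (Real.sinh x)^2) x :=
      (Real.hasDerivAt_cosh x).div (Real.hasDerivAt_sinh x) hs
    have h2 : HasDerivAt (fun u : ℝ => u⁻¹) (-(x^2)⁻¹) x := by
      simpa using hasDerivAt_inv hxp.ne'
    have h3 := h1.sub h2
    simp only [sub_neg_eq_add] at h3
    exact h3.hasDerivWithinAt
  · intro x hx
    rw [hint] at hx
    have hxp : (0:ℝ) < x := hx
    have hs : 0 < Real.sinh x := Real.sinh_pos_iff.2 hxp
    have hlt : x < Real.sinh x := Real.self_lt_sinh_iff.2 hxp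
    have h1 : Real.sinh x * Real.sinh x - Real.cosh x * Real.cosh x = -1 := by
      nlinarith [Real.cosh_sq_sub_sinh_sq x]
    rw [h1, neg_div]
    have h2 : (x:ℝ)^2 ≤ (Real.sinh x)^2 := by nlinarith
    have h3 : (1:ℝ)/(Real.sinh x)^2 ≤ (x^2)⁻¹ := by
      rw [one_div]
      exact inv_anti₀ (by positivity) h2
    simp only [one_div] at h3 ⊢
    linarith

theorem stmt4 (p s m : ℝ) (hps : 0 < p) (hs : 0 < s) (hm : 0 ≤ m) :
    ∀ a b c : ℝ, 0 < a → 0 < b → 0 < c → 2 / a = 1 / b + 1 / c →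
      (1 / (p * s * a)) * (Real.exp (p * s * a * m) - Real.exp (-(p * s * a * m))) ≤
        ((1 / (p * s * b)) * (Real.exp (p * s * b * m) - Real.exp (-(p * s * b * m)))) ^
            (c / (b + c)) *
          ((1 / (p * s * c)) * (Real.exp (p * s * c * m) - Real.exp (-(p * s * c * m)))) ^
            (b / (b + c)) := by
  intro a b c ha hb hc habc
  have hbc : 0 < b + c := by linarith
  set L : ℝ := c / (b + c) with hL
  set M : ℝ := b / (b + c) with hM
  have hLpos : 0 < L := by positivity
  have hMpos : 0 < M := by positivity
  have hLM : L + M = 1 := by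
    rw [hL, hM, ← add_div, add_comm c b, div_self hbc.ne']
  rcases eq_or_lt_of_le hm with hm0 | hm0
  · rw [← hm0]
    simp only [mul_zero, Real.exp_zero, neg_zero, sub_self]
    rw [Real.zero_rpow hLpos.ne', Real.zero_rpow hMpos.ne']
    simp
  · -- m > 0
    have ha' : a = L * b + M * c := by
      have h1 : a * (b + c) = 2 * (b * c) := by
        field_simp at habc
        nlinarith [habc]
      rw [hL, hM]
      field_simp
      nlinarith [h1]
    set u : ℝ → ℝ := fun t => p * s * t * m with hu
    have hupos : ∀ t, 0 < t → 0 < u t := fun t ht => by positivity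
    have key : ∀ t, 0 < t →
        (1 / (p * s * t)) * (Real.exp (u t) - Real.exp (-(u t)))
          = 2 * m * (Real.sinh (u t) / u t) := by
      intro t ht
      rw [Real.sinh_eq]
      have : p * s * t ≠ 0 := by positivity
      field_simp [hu]
      ring
    have hfpos : ∀ t, 0 < t → 0 < 2 * m * (Real.sinh (u t) / u t) := by
      intro t ht
      have := Real.sinh_pos_iff.2 (hupos t ht)
      have := hupos t ht
      positivity
    rw [key a ha, key b hb, key c hc]
    have hua : u a = L * u b + M * u c := by simp only [hu]; rw [ha']; ring
    have hconv := aux_convex.2 (mem_Ioi.2 (hupos b hb)) (mem_Ioi.2 (hupos c hc))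
      hLpos.le hMpos.le hLM
    simp only [smul_eq_mul] at hconv
    rw [← hua] at hconv
    have hlog : ∀ t, 0 < t → Real.log (2 * m * (Real.sinh (u t) / u t))
        = Real.log (2 * m) + (Real.log (Real.sinh (u t)) - Real.log (u t)) := by
      intro t ht
      have h1 : 0 < Real.sinh (u t) := Real.sinh_pos_iff.2 (hupos t ht)
      have h2 : 0 < u t := hupos t ht
      rw [Real.log_mul (by positivity) (by positivity), Real.log_div h1.ne' h2.ne']
    rw [Real.rpow_def_of_pos (hfpos b hb), Real.rpow_def_of_pos (hfpos c hc),
      ← Real.exp_add, ← Real.exp_log (hfpos a ha)]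
    apply Real.exp_le_exp.2
    rw [hlog a ha, hlog b hb, hlog c hc]
    have : L * Real.log (2*m) + M * Real.log (2*m) = Real.log (2*m) := by
      rw [← add_mul, hLM, one_mul]
    nlinarith [hconv]
end
end

section
/- Let F, G, H : (0,∞) → [0,∞) be measurable functions, not almost everywhere zero, satisfying H(r) ≥ F(t)^{s/(t+s)} G(s)^{t/(t+s)} whenever 2/r = 1/s + 1/t. Then for every q ≥ 1, 2 (∫_0^∞ r^{q-1} H(r) dr)^{-1/q} ≤ (∫_0^∞ t^{q-1} F(t) dt)^{-1/q} + (∫_0^∞ s^{q-1} G(s) ds)^{-1/q}. -/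
open MeasureTheory Real Set
open scoped Pointwise RealInnerProductSpace ENNReal NNReal

noncomputable section

lemma ballTransport (ρ : ℝ → ℝ) (hρm : Measurable ρ) (hρ0 : ∀ t, 0 ≤ ρ t)
    (hρz : ∀ t ≤ (0:ℝ), ρ t = 0) (hρi : Integrable ρ) {A : ℝ}
    (hA : A = ∫ t in Set.Ioi (0:ℝ), ρ t) (hApos : 0 < A) :
    ∃ u : ℝ → ℝ, StrictMonoOn u (Set.Ioo 0 1) ∧ (∀ x ∈ Set.Ioo (0:ℝ) 1, 0 < u x) ∧
      (∀ᵐ x ∂(volume.restrict (Set.Ioo (0:ℝ) 1)),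
        0 < ρ (u x) ∧ HasDerivAt u (A / ρ (u x)) x) := by
  set Φ : ℝ → ℝ := fun d => ∫ t in (0:ℝ)..d, ρ t with hΦdef
  have hΦcont : Continuous Φ := hρi.continuous_primitive 0
  have hΦadd : ∀ c d : ℝ, Φ d = Φ c + ∫ t in c..d, ρ t := by
    intro c d
    rw [hΦdef]
    exact (intervalIntegral.integral_add_adjacent_intervals
      (hρi.intervalIntegrable) (hρi.intervalIntegrable)).symm
  have hΦmono : Monotone Φ := by
    intro c d hcd
    rw [hΦadd c d]
    have : 0 ≤ ∫ t in c..d, ρ t :=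
      intervalIntegral.integral_nonneg hcd (fun x _ => hρ0 x)
    linarith
  have hΦ0 : Φ 0 = 0 := by simp [hΦdef]
  have hΦIoc : ∀ d : ℝ, 0 ≤ d → Φ d = ∫ t in Set.Ioc 0 d, ρ t := by
    intro d hd
    rw [hΦdef]
    exact intervalIntegral.integral_of_le hd
  have hΦleA : ∀ d, Φ d ≤ A := by
    intro d
    rcases le_or_gt d 0 with hd | hd
    · have : Φ d ≤ Φ 0 := hΦmono hd
      rw [hΦ0] at this; linarith
    · rw [hΦIoc d hd.le, hA]
      refine setIntegral_mono_set hρi.integrableOn ?_ ?_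
      · exact Filter.Eventually.of_forall (fun x => hρ0 x)
      · exact (Set.Ioc_subset_Ioi_self).eventuallyLE
  have hΦreach : ∀ c : ℝ, c < A → ∃ d : ℝ, c ≤ Φ d := by
    intro c hc
    have hUnion : (⋃ n : ℕ, Set.Ioc (0:ℝ) n) = Set.Ioi 0 := by
      ext t
      simp only [Set.mem_iUnion, Set.mem_Ioc, Set.mem_Ioi]
      constructor
      · rintro ⟨n, h1, _⟩; exact h1
      · intro ht
        obtain ⟨n, hn⟩ := exists_nat_ge t
        exact ⟨n, ht, hn⟩
    have htend := tendsto_setIntegral_of_monotone (μ := volume) (f := ρ)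
      (s := fun n : ℕ => Set.Ioc (0:ℝ) n) (fun n => measurableSet_Ioc)
      (fun m n hmn => Set.Ioc_subset_Ioc le_rfl (by exact_mod_cast hmn))
      (by rw [hUnion]; exact hρi.integrableOn)
    rw [hUnion, ← hA] at htend
    have hev := htend.eventually (eventually_gt_nhds hc)
    obtain ⟨n, hn⟩ := hev.exists
    refine ⟨n, ?_⟩
    rw [hΦIoc n (Nat.cast_nonneg n)]
    exact hn.le
  -- the inverse function
  set u : ℝ → ℝ := fun x => sInf {t | A * x ≤ Φ t} with hudef
  have hSclosed : ∀ x : ℝ, IsClosed {t | A * x ≤ Φ t} :=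
    fun x => isClosed_le continuous_const hΦcont
  have hSbdd : ∀ x : ℝ, 0 < x → BddBelow {t | A * x ≤ Φ t} := by
    intro x hx
    refine ⟨0, fun t ht => ?_⟩
    by_contra hlt
    push_neg at hlt
    have h1 : Φ t ≤ Φ 0 := hΦmono hlt.le
    rw [hΦ0] at h1
    have : A * x ≤ 0 := le_trans ht h1
    nlinarith
  have hSne : ∀ x : ℝ, x < 1 → {t | A * x ≤ Φ t}.Nonempty := by
    intro x hx
    obtain ⟨d, hd⟩ := hΦreach (A * x) (by nlinarith)
    exact ⟨d, hd⟩
  have humem : ∀ x ∈ Set.Ioo (0:ℝ) 1, A * x ≤ Φ (u x) := by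
    intro x hx
    exact (hSclosed x).csInf_mem (hSne x hx.2) (hSbdd x hx.1)
  have hueq : ∀ x ∈ Set.Ioo (0:ℝ) 1, Φ (u x) = A * x := by
    intro x hx
    refine le_antisymm ?_ (humem x hx)
    by_contra hlt
    push_neg at hlt
    have hnb : Φ ⁻¹' (Set.Ioi (A * x)) ∈ nhds (u x) :=
      hΦcont.continuousAt.preimage_mem_nhds (Ioi_mem_nhds hlt)
    obtain ⟨ε, hε, hball⟩ := Metric.mem_nhds_iff.1 hnb
    have hmem2 : u x - ε / 2 ∈ {t | A * x ≤ Φ t} := by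
      have hmb : u x - ε / 2 ∈ Metric.ball (u x) ε := by
        show dist _ _ < ε
        rw [Real.dist_eq, show u x - ε / 2 - u x = -(ε/2) by ring, abs_neg,
          abs_of_nonneg (by linarith)]
        linarith
      have h4 := hball hmb
      simp only [Set.mem_preimage, Set.mem_Ioi] at h4
      exact h4.le
    have h5 : u x ≤ u x - ε / 2 := csInf_le (hSbdd x hx.1) hmem2
    linarith
  have hupos : ∀ x ∈ Set.Ioo (0:ℝ) 1, 0 < u x := by
    intro x hx
    have hAx : 0 < A * x := by nlinarith [hx.1]
    have hnb : Φ ⁻¹' (Set.Iio (A * x)) ∈ nhds (0:ℝ) := by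
      refine hΦcont.continuousAt.preimage_mem_nhds ?_
      rw [hΦ0]
      exact Iio_mem_nhds hAx
    obtain ⟨ε, hε, hball⟩ := Metric.mem_nhds_iff.1 hnb
    have hlb : ∀ t ∈ {t | A * x ≤ Φ t}, ε / 2 ≤ t := by
      intro t ht
      by_contra hlt
      push_neg at hlt
      have h1 : Φ t ≤ Φ (ε / 2) := hΦmono hlt.le
      have h2 : (ε / 2 : ℝ) ∈ Metric.ball (0:ℝ) ε := by
        show dist _ _ < ε
        rw [Real.dist_eq, sub_zero, abs_of_nonneg (by linarith)]
        linarith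
      have h3 := hball h2
      simp only [Set.mem_preimage, Set.mem_Iio] at h3
      have : A * x ≤ Φ t := ht
      linarith
    have h6 : ε / 2 ≤ u x := le_csInf (hSne x hx.2) hlb
    linarith
  have huchar : ∀ x ∈ Set.Ioo (0:ℝ) 1, ∀ d : ℝ, (u x ≤ d ↔ A * x ≤ Φ d) := by
    intro x hx d
    constructor
    · intro h
      rw [← hueq x hx]
      exact hΦmono h
    · intro h
      exact csInf_le (hSbdd x hx.1) h
  have hustrict : StrictMonoOn u (Set.Ioo 0 1) := by
    intro x hx y hy hxy
    by_contra hle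
    push_neg at hle
    have h1 : Φ (u y) ≤ Φ (u x) := hΦmono hle
    rw [hueq x hx, hueq y hy] at h1
    nlinarith [hx.1]
  have hΦneg : ∀ d : ℝ, d ≤ 0 → Φ d = 0 := by
    intro d hd
    have h1 : Φ 0 = Φ d + ∫ t in d..0, ρ t := hΦadd d 0
    have h2 : ∫ t in d..0, ρ t = 0 := by
      rw [intervalIntegral.integral_of_le hd]
      exact setIntegral_eq_zero_of_forall_eq_zero (fun x hx => hρz x hx.2)
    rw [hΦ0, h2] at h1
    linarith
  have hΦnonneg : ∀ d : ℝ, 0 ≤ Φ d := by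
    intro d
    rcases le_or_gt d 0 with hd | hd
    · rw [hΦneg d hd]
    · rw [← hΦ0]; exact hΦmono hd.le
  have hΦIic : ∀ d : ℝ, Φ d = ∫ t in Set.Iic d, ρ t := by
    intro d
    rcases le_or_gt d 0 with hd | hd
    · rw [hΦneg d hd]
      exact (setIntegral_eq_zero_of_forall_eq_zero
        (fun x hx => hρz x (le_trans hx hd))).symm
    · have hsplit : Set.Iic d = Set.Iic 0 ∪ Set.Ioc 0 d := (Set.Iic_union_Ioc_eq_Iic hd.le).symm
      have hz : ∫ t in Set.Iic (0:ℝ), ρ t = 0 :=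
        setIntegral_eq_zero_of_forall_eq_zero (fun x hx => hρz x hx)
      rw [hΦIoc d hd.le, hsplit, setIntegral_union (Set.Iic_disjoint_Ioc le_rfl)
        measurableSet_Ioc hρi.integrableOn hρi.integrableOn, hz, zero_add]
  -- measurable extension
  set g : ℝ → ℝ := (Set.Ioo (0:ℝ) 1).indicator u with hgdef
  have hgu : ∀ x ∈ Set.Ioo (0:ℝ) 1, g x = u x := fun x hx => Set.indicator_of_mem hx u
  have hgmeas : Measurable g := by
    apply measurable_of_Iic
    intro d
    have hpre : g ⁻¹' Set.Iic d =
        (Set.Ioo 0 1 ∩ Set.Iic (Φ d / A)) ∪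
          (if (0:ℝ) ≤ d then (Set.Ioo (0:ℝ) 1)ᶜ else ∅) := by
      ext x
      by_cases hx : x ∈ Set.Ioo (0:ℝ) 1
      · simp only [Set.mem_preimage, Set.mem_Iic, Set.mem_union, Set.mem_inter_iff, hx,
          true_and, hgu x hx]
        rw [huchar x hx d]
        constructor
        · intro h
          left
          rw [le_div_iff₀ hApos, mul_comm]
          exact h
        · intro h
          rcases h with h | h
          · rw [le_div_iff₀ hApos, mul_comm] at h
            exact h
          · split_ifs at h
            · exact absurd hx h
            · exact absurd h (Set.notMem_empty x)
      · have hgx : g x = 0 := Set.indicator_of_notMem hx u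
        simp only [Set.mem_preimage, Set.mem_Iic, hgx, Set.mem_union, Set.mem_inter_iff, hx,
          false_and, false_or]
        split_ifs with hd
        · simp [hx, hd]
        · push_neg at hd
          simp only [Set.mem_empty_iff_false, iff_false, not_le]
          exact hd
    rw [hpre]
    split_ifs with hd
    · exact (measurableSet_Ioo.inter measurableSet_Iic).union measurableSet_Ioo.compl
    · exact (measurableSet_Ioo.inter measurableSet_Iic).union MeasurableSet.empty
  -- the density measure
  set μt : Measure ℝ := volume.withDensity (fun t => ENNReal.ofReal (ρ t)) with hμtdef
  have hρnn : (0:ℝ→ℝ) ≤ᵐ[volume] ρ := Filter.Eventually.of_forall hρ0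
  have hμtIic : ∀ d : ℝ, μt (Set.Iic d) = ENNReal.ofReal (Φ d) := by
    intro d
    rw [hμtdef, withDensity_apply _ measurableSet_Iic,
      ← ofReal_integral_eq_lintegral_ofReal hρi.integrableOn (ae_restrict_of_ae hρnn),
      ← hΦIic d]
  haveI hμtfin : IsFiniteMeasure μt := by
    constructor
    rw [hμtdef, withDensity_apply _ MeasurableSet.univ, Measure.restrict_univ,
      ← ofReal_integral_eq_lintegral_ofReal hρi hρnn]
    exact ENNReal.ofReal_lt_top
  set ν : Measure ℝ := Measure.map g (volume.restrict (Set.Ioo 0 1)) with hνdef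
  haveI hνfin : IsFiniteMeasure ν := by
    constructor
    rw [hνdef, Measure.map_apply hgmeas MeasurableSet.univ, Set.preimage_univ,
      Measure.restrict_apply_univ, Real.volume_Ioo]
    exact ENNReal.ofReal_lt_top
  have hνIic : ∀ d : ℝ, ν (Set.Iic d) = ENNReal.ofReal (Φ d / A) := by
    intro d
    rw [hνdef, Measure.map_apply hgmeas measurableSet_Iic,
      Measure.restrict_apply (hgmeas measurableSet_Iic)]
    have hseteq : g ⁻¹' Set.Iic d ∩ Set.Ioo 0 1 = Set.Ioo 0 1 ∩ Set.Iic (Φ d / A) := by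
      ext x
      constructor
      · rintro ⟨hx1, hx2⟩
        refine ⟨hx2, ?_⟩
        rw [Set.mem_preimage, Set.mem_Iic, hgu x hx2, huchar x hx2 d] at hx1
        rw [Set.mem_Iic, le_div_iff₀ hApos, mul_comm]
        exact hx1
      · rintro ⟨hx1, hx2⟩
        refine ⟨?_, hx1⟩
        rw [Set.mem_Iic, le_div_iff₀ hApos, mul_comm] at hx2
        rw [Set.mem_preimage, Set.mem_Iic, hgu x hx1, huchar x hx1 d]
        exact hx2
    rw [hseteq]
    have h0c : 0 ≤ Φ d / A := div_nonneg (hΦnonneg d) hApos.le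
    rcases lt_or_ge (Φ d / A) 1 with hc | hc
    · have heq2 : Set.Ioo (0:ℝ) 1 ∩ Set.Iic (Φ d / A) = Set.Ioc 0 (Φ d / A) := by
        ext x
        simp only [Set.mem_inter_iff, Set.mem_Ioo, Set.mem_Iic, Set.mem_Ioc]
        exact ⟨fun ⟨⟨h1, _⟩, h3⟩ => ⟨h1, h3⟩,
          fun ⟨h1, h3⟩ => ⟨⟨h1, lt_of_le_of_lt h3 hc⟩, h3⟩⟩
      rw [heq2, Real.volume_Ioc, sub_zero]
    · have hc1 : Φ d / A = 1 := le_antisymm (by rw [div_le_one hApos]; exact hΦleA d) hc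
      rw [hc1]
      have heq2 : Set.Ioo (0:ℝ) 1 ∩ Set.Iic 1 = Set.Ioo 0 1 :=
        Set.inter_eq_left.mpr (fun x hx => hx.2.le)
      rw [heq2, Real.volume_Ioo]
      norm_num
  have hν : ν = (ENNReal.ofReal A)⁻¹ • μt := by
    refine Measure.ext_of_Iic ν _ (fun d => ?_)
    rw [hνIic d, Measure.smul_apply, smul_eq_mul, hμtIic d,
      ENNReal.ofReal_div_of_pos hApos, ENNReal.div_eq_inv_mul]
  have hpull : ∀ N : Set ℝ, MeasurableSet N → volume N = 0 →
      (volume.restrict (Set.Ioo (0:ℝ) 1)) (g ⁻¹' N) = 0 := by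
    intro N hNm hN0
    have h1 : μt N = 0 := withDensity_absolutelyContinuous volume _ hN0
    have h2 : ν N = 0 := by rw [hν, Measure.smul_apply, smul_eq_mul, h1, mul_zero]
    rw [hνdef, Measure.map_apply hgmeas hNm] at h2
    exact h2
  -- Stieltjes function and a.e. derivative of Φ
  set ΦS : StieltjesFunction ℝ := ⟨Φ, hΦmono, fun x => (hΦcont.continuousAt).continuousWithinAt⟩
    with hΦSdef
  have hSm : ΦS.measure = μt := by
    refine Measure.ext_of_Ioc _ _ (fun a b hab => ?_)
    rw [StieltjesFunction.measure_Ioc, hμtdef, withDensity_apply _ measurableSet_Ioc,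
      ← ofReal_integral_eq_lintegral_ofReal hρi.integrableOn (ae_restrict_of_ae hρnn)]
    congr 1
    have h1 := hΦadd a b
    rw [intervalIntegral.integral_of_le hab.le] at h1
    show Φ b - Φ a = _
    linarith
  have hΦderiv : ∀ᵐ t : ℝ, HasDerivAt Φ (ρ t) t := by
    have h1 := ΦS.ae_hasDerivAt
    rw [hSm] at h1
    have h2 : (μt.rnDeriv volume) =ᵐ[volume] (fun t => ENNReal.ofReal (ρ t)) := by
      rw [hμtdef]
      exact Measure.rnDeriv_withDensity volume (ENNReal.measurable_ofReal.comp hρm)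
    filter_upwards [h1, h2] with t ht hteq
    rw [hteq, ENNReal.toReal_ofReal (hρ0 t)] at ht
    exact ht
  obtain ⟨N, hNsub, hNm, hN0⟩ :=
    exists_measurable_superset_of_null (ae_iff.mp hΦderiv)
  have hgN := hpull N hNm hN0
  have haeN : ∀ᵐ x ∂volume.restrict (Set.Ioo (0:ℝ) 1), g x ∉ N := by
    have h9 := (measure_eq_zero_iff_ae_notMem (μ := volume.restrict (Set.Ioo (0:ℝ) 1))).mp hgN
    filter_upwards [h9] with x hx using hx
  have hdiffae := (hustrict.monotoneOn).ae_differentiableWithinAt measurableSet_Ioo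
  have hmemae : ∀ᵐ x ∂volume.restrict (Set.Ioo (0:ℝ) 1), x ∈ Set.Ioo (0:ℝ) 1 :=
    ae_restrict_mem measurableSet_Ioo
  refine ⟨u, hustrict, hupos, ?_⟩
  filter_upwards [hdiffae, hmemae, haeN] with x hx1 hx2 hx3
  have hxd : DifferentiableAt ℝ u x := hx1.differentiableAt (Ioo_mem_nhds hx2.1 hx2.2)
  have hud : HasDerivAt u (deriv u x) x := hxd.hasDerivAt
  rw [hgu x hx2] at hx3
  have hΦat : HasDerivAt Φ (ρ (u x)) (u x) := by
    by_contra hcon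
    exact hx3 (hNsub hcon)
  have hcomp : HasDerivAt (Φ ∘ u) (ρ (u x) * deriv u x) x := hΦat.comp x hud
  have hev : (fun y => A * y) =ᶠ[nhds x] (Φ ∘ u) := by
    filter_upwards [Ioo_mem_nhds hx2.1 hx2.2] with y hy
    exact (hueq y hy).symm
  have hlin : HasDerivAt (fun y => A * y) (ρ (u x) * deriv u x) x :=
    hcomp.congr_of_eventuallyEq hev
  have hlin2 : HasDerivAt (fun y : ℝ => A * y) A x := by
    simpa using (hasDerivAt_id x).const_mul A
  have hkey : ρ (u x) * deriv u x = A := hlin.unique hlin2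
  have hρpos : 0 < ρ (u x) := by
    rcases (hρ0 (u x)).lt_or_eq with h | h
    · exact h
    · exfalso
      rw [← h, zero_mul] at hkey
      exact hApos.ne hkey
  refine ⟨hρpos, ?_⟩
  have hdval : deriv u x = A / ρ (u x) := by
    field_simp
    linarith [hkey]
  rw [← hdval]
  exact hud

lemma ballPointwise {q A B U V FU GV HW : ℝ} (hq : 0 < q) (hA : 0 < A) (hB : 0 < B)
    (hU : 0 < U) (hV : 0 < V) (hFU : 0 < FU) (hGV : 0 < GV)
    (hH : FU ^ (V / (U + V)) * GV ^ (U / (U + V)) ≤ HW) :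
    2 ^ q * (A ^ (-(1/q)) + B ^ (-(1/q))) ^ (-q) ≤
      (2 * ((A / (U ^ (q-1) * FU)) * V ^ 2 + (B / (V ^ (q-1) * GV)) * U ^ 2) / (U + V) ^ 2) *
        ((2 * U * V / (U + V)) ^ (q - 1) * HW) := by
  have hUV : 0 < U + V := by linarith
  set θ : ℝ := V / (U + V) with hθdef
  have hθ : 0 < θ := div_pos hV hUV
  have h1θeq : 1 - θ = U / (U + V) := by rw [hθdef]; field_simp; ring
  have h1θ : 0 < 1 - θ := by rw [h1θeq]; exact div_pos hU hUV
  set u' : ℝ := A / (U ^ (q-1) * FU) with hu'def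
  set v' : ℝ := B / (V ^ (q-1) * GV) with hv'def
  have hu'pos : 0 < u' := by
    rw [hu'def]; exact div_pos hA (mul_pos (rpow_pos_of_pos hU _) hFU)
  have hv'pos : 0 < v' := by
    rw [hv'def]; exact div_pos hB (mul_pos (rpow_pos_of_pos hV _) hGV)
  set a : ℝ := A ^ (-(1/q)) with hadef
  set b : ℝ := B ^ (-(1/q)) with hbdef
  have ha : 0 < a := rpow_pos_of_pos hA _
  have hb : 0 < b := rpow_pos_of_pos hB _
  set W : ℝ := 2 * U * V / (U + V) with hWdef
  have hW : 0 < W := by rw [hWdef]; positivity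
  set M1 : ℝ := (u' * V ^ 2 / θ) ^ θ * (v' * U ^ 2 / (1 - θ)) ^ (1 - θ) with hM1def
  have hM1pos : 0 < M1 := by
    rw [hM1def]
    exact mul_pos (rpow_pos_of_pos (by positivity) _) (rpow_pos_of_pos (by positivity) _)
  set M2 : ℝ := (a / θ) ^ θ * (b / (1 - θ)) ^ (1 - θ) with hM2def
  have hM2pos : 0 < M2 := by
    rw [hM2def]
    exact mul_pos (rpow_pos_of_pos (by positivity) _) (rpow_pos_of_pos (by positivity) _)
  -- AM-GM 1
  have hAM1 : M1 ≤ u' * V ^ 2 + v' * U ^ 2 := by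
    have h := Real.geom_mean_le_arith_mean2_weighted hθ.le h1θ.le
      (by positivity : (0:ℝ) ≤ u' * V ^ 2 / θ) (by positivity : (0:ℝ) ≤ v' * U ^ 2 / (1 - θ))
      (by ring)
    have e1 : θ * (u' * V ^ 2 / θ) = u' * V ^ 2 := by field_simp
    have e2 : (1 - θ) * (v' * U ^ 2 / (1 - θ)) = v' * U ^ 2 := by field_simp
    rw [e1, e2] at h
    exact h
  -- AM-GM 2
  have hAM2 : M2 ≤ a + b := by
    have h := Real.geom_mean_le_arith_mean2_weighted hθ.le h1θ.le
      (by positivity : (0:ℝ) ≤ a / θ) (by positivity : (0:ℝ) ≤ b / (1 - θ)) (by ring)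
    have e1 : θ * (a / θ) = a := by field_simp
    have e2 : (1 - θ) * (b / (1 - θ)) = b := by field_simp
    rw [e1, e2] at h
    exact h
  -- the exact identity
  have hid : 2 ^ q * M2 ^ (-q) =
      (2 * M1 / (U + V) ^ 2) * (W ^ (q - 1) * (FU ^ θ * GV ^ (1 - θ))) := by
    have lu' : Real.log u' = Real.log A - ((q-1) * Real.log U + Real.log FU) := by
      rw [hu'def, Real.log_div hA.ne' (by positivity),
        Real.log_mul (by positivity) hFU.ne', Real.log_rpow hU]
    have lv' : Real.log v' = Real.log B - ((q-1) * Real.log V + Real.log GV) := by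
      rw [hv'def, Real.log_div hB.ne' (by positivity),
        Real.log_mul (by positivity) hGV.ne', Real.log_rpow hV]
    have lθ : Real.log θ = Real.log V - Real.log (U + V) :=
      Real.log_div hV.ne' hUV.ne'
    have l1θ : Real.log (1 - θ) = Real.log U - Real.log (U + V) := by
      rw [h1θeq]; exact Real.log_div hU.ne' hUV.ne'
    have lW : Real.log W = Real.log 2 + Real.log U + Real.log V - Real.log (U + V) := by
      rw [hWdef, Real.log_div (by positivity) hUV.ne',
        Real.log_mul (by positivity) hV.ne', Real.log_mul two_ne_zero hU.ne']
    have la : Real.log a = -(1/q) * Real.log A := by rw [hadef]; exact Real.log_rpow hA _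
    have lb : Real.log b = -(1/q) * Real.log B := by rw [hbdef]; exact Real.log_rpow hB _
    have lM1 : Real.log M1 = θ * ((Real.log u' + 2 * Real.log V) - Real.log θ)
        + (1 - θ) * ((Real.log v' + 2 * Real.log U) - Real.log (1 - θ)) := by
      rw [hM1def, Real.log_mul (by positivity) (by positivity),
        Real.log_rpow (by positivity), Real.log_rpow (by positivity),
        Real.log_div (by positivity) hθ.ne', Real.log_div (by positivity) h1θ.ne',
        Real.log_mul hu'pos.ne' (by positivity), Real.log_mul hv'pos.ne' (by positivity),
        Real.log_pow, Real.log_pow]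
      push_cast
      ring
    have lM2 : Real.log M2 = θ * (Real.log a - Real.log θ)
        + (1 - θ) * (Real.log b - Real.log (1 - θ)) := by
      rw [hM2def, Real.log_mul (by positivity) (by positivity),
        Real.log_rpow (by positivity), Real.log_rpow (by positivity),
        Real.log_div ha.ne' hθ.ne', Real.log_div hb.ne' h1θ.ne']
    have hM2pos' := hM2pos
    have hM1pos' := hM1pos
    have hWpos' := hW
    have hapos' := ha
    have hbpos' := hb
    have hθpos' := hθ
    have h1θpos' := h1θ
    have hu'pos' := hu'pos
    have hv'pos' := hv'pos
    clear_value θ u' v' a b W M1 M2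
    apply Real.log_injOn_pos (Set.mem_Ioi.mpr (by positivity))
      (Set.mem_Ioi.mpr (by positivity))
    rw [Real.log_mul (by positivity) (by positivity),
      Real.log_rpow two_pos, Real.log_rpow hM2pos, lM2,
      Real.log_mul (by positivity) (by positivity),
      Real.log_div (by positivity) (by positivity),
      Real.log_mul two_ne_zero hM1pos.ne', Real.log_pow,
      Real.log_mul (by positivity) (by positivity),
      Real.log_rpow hW,
      Real.log_mul (by positivity) (by positivity),
      Real.log_rpow hFU, Real.log_rpow hGV,
      lM1, lu', lv', lθ, l1θ, lW, la, lb]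
    push_cast
    field_simp
    ring
  -- chain
  have hHW : 0 < HW := lt_of_lt_of_le (by positivity) hH
  have step1 : 2 ^ q * (a + b) ^ (-q) ≤ 2 ^ q * M2 ^ (-q) := by
    have h1 : M2 ^ q ≤ (a + b) ^ q := Real.rpow_le_rpow hM2pos.le hAM2 hq.le
    have h2 : (a + b) ^ (-q) ≤ M2 ^ (-q) := by
      rw [Real.rpow_neg (by positivity), Real.rpow_neg hM2pos.le]
      exact inv_anti₀ (rpow_pos_of_pos hM2pos q) h1
    have h2pow : (0:ℝ) < 2 ^ q := rpow_pos_of_pos two_pos q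
    nlinarith
  have step2 : (2 * M1 / (U + V) ^ 2) * (W ^ (q - 1) * (FU ^ θ * GV ^ (1 - θ))) ≤
      (2 * (u' * V ^ 2 + v' * U ^ 2) / (U + V) ^ 2) * (W ^ (q - 1) * HW) := by
    have hf1 : 2 * M1 / (U + V) ^ 2 ≤ 2 * (u' * V ^ 2 + v' * U ^ 2) / (U + V) ^ 2 :=
      (div_le_div_iff_of_pos_right (by positivity)).mpr (by linarith)
    have hH' : FU ^ θ * GV ^ (1 - θ) ≤ HW := by rw [h1θeq]; exact hH
    have hf2 : W ^ (q - 1) * (FU ^ θ * GV ^ (1 - θ)) ≤ W ^ (q - 1) * HW :=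
      mul_le_mul_of_nonneg_left hH' (by positivity)
    exact mul_le_mul hf1 hf2 (by positivity) (by positivity)
  calc 2 ^ q * (a + b) ^ (-q) ≤ 2 ^ q * M2 ^ (-q) := step1
    _ = (2 * M1 / (U + V) ^ 2) * (W ^ (q - 1) * (FU ^ θ * GV ^ (1 - θ))) := hid
    _ ≤ _ := step2

set_option maxHeartbeats 2000000 in
theorem stmt5 (F G H : ℝ → ℝ) (hF : Measurable F) (hG : Measurable G) (hH : Measurable H)
    (hFpos : ∀ r ∈ Set.Ioi (0 : ℝ), 0 ≤ F r) (hGpos : ∀ r ∈ Set.Ioi (0 : ℝ), 0 ≤ G r)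
    (hHpos : ∀ r ∈ Set.Ioi (0 : ℝ), 0 ≤ H r)
    (hFne : ¬ (∀ᵐ r ∂(volume.restrict (Set.Ioi (0 : ℝ))), F r = 0))
    (hGne : ¬ (∀ᵐ r ∂(volume.restrict (Set.Ioi (0 : ℝ))), G r = 0))
    (hHne : ¬ (∀ᵐ r ∂(volume.restrict (Set.Ioi (0 : ℝ))), H r = 0))
    (hyp : ∀ r s t : ℝ, 0 < r → 0 < s → 0 < t → 2 / r = 1 / s + 1 / t →
      F t ^ (s / (t + s)) * G s ^ (t / (t + s)) ≤ H r)
    (q : ℝ) (hq : 1 ≤ q)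
    (hFi : IntegrableOn (fun t => t ^ (q - 1) * F t) (Set.Ioi 0))
    (hGi : IntegrableOn (fun s => s ^ (q - 1) * G s) (Set.Ioi 0))
    (hHi : IntegrableOn (fun r => r ^ (q - 1) * H r) (Set.Ioi 0))
    (hFp : 0 < ∫ t in Set.Ioi (0 : ℝ), t ^ (q - 1) * F t)
    (hGp : 0 < ∫ s in Set.Ioi (0 : ℝ), s ^ (q - 1) * G s)
    (hHp : 0 < ∫ r in Set.Ioi (0 : ℝ), r ^ (q - 1) * H r) :
    2 * (∫ r in Set.Ioi (0 : ℝ), r ^ (q - 1) * H r) ^ (-(1 / q)) ≤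
      (∫ t in Set.Ioi (0 : ℝ), t ^ (q - 1) * F t) ^ (-(1 / q)) +
        (∫ s in Set.Ioi (0 : ℝ), s ^ (q - 1) * G s) ^ (-(1 / q)) := by
  have hq0 : (0:ℝ) < q := lt_of_lt_of_le one_pos hq
  set A := ∫ t in Set.Ioi (0:ℝ), t ^ (q - 1) * F t with hAdef
  set B := ∫ s in Set.Ioi (0:ℝ), s ^ (q - 1) * G s with hBdef
  set C := ∫ r in Set.Ioi (0:ℝ), r ^ (q - 1) * H r with hCdef
  set ρF : ℝ → ℝ := (Set.Ioi (0:ℝ)).indicator (fun t => t ^ (q - 1) * F t) with hρFdef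
  set ρG : ℝ → ℝ := (Set.Ioi (0:ℝ)).indicator (fun s => s ^ (q - 1) * G s) with hρGdef
  set ρH : ℝ → ℝ := (Set.Ioi (0:ℝ)).indicator (fun r => r ^ (q - 1) * H r) with hρHdef
  have hρFm : Measurable ρF :=
    (((Real.continuous_rpow_const (by linarith : (0:ℝ) ≤ q - 1)).measurable).mul hF).indicator measurableSet_Ioi
  have hρGm : Measurable ρG :=
    (((Real.continuous_rpow_const (by linarith : (0:ℝ) ≤ q - 1)).measurable).mul hG).indicator measurableSet_Ioi
  have hρHm : Measurable ρH :=
    (((Real.continuous_rpow_const (by linarith : (0:ℝ) ≤ q - 1)).measurable).mul hH).indicator measurableSet_Ioi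
  have hρF0 : ∀ t, 0 ≤ ρF t := fun t =>
    Set.indicator_nonneg (fun s hs => mul_nonneg (rpow_nonneg (le_of_lt hs) _) (hFpos s hs)) t
  have hρG0 : ∀ t, 0 ≤ ρG t := fun t =>
    Set.indicator_nonneg (fun s hs => mul_nonneg (rpow_nonneg (le_of_lt hs) _) (hGpos s hs)) t
  have hρH0 : ∀ t, 0 ≤ ρH t := fun t =>
    Set.indicator_nonneg (fun s hs => mul_nonneg (rpow_nonneg (le_of_lt hs) _) (hHpos s hs)) t
  have hρFz : ∀ t ≤ (0:ℝ), ρF t = 0 := fun t ht =>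
    Set.indicator_of_notMem (by simp [ht, not_lt.mpr ht]) _
  have hρGz : ∀ t ≤ (0:ℝ), ρG t = 0 := fun t ht =>
    Set.indicator_of_notMem (by simp [ht, not_lt.mpr ht]) _
  have hρFi : Integrable ρF := (integrable_indicator_iff measurableSet_Ioi).2 hFi
  have hρGi : Integrable ρG := (integrable_indicator_iff measurableSet_Ioi).2 hGi
  have hρHi : Integrable ρH := (integrable_indicator_iff measurableSet_Ioi).2 hHi
  have hAρ : A = ∫ t in Set.Ioi (0:ℝ), ρF t := by
    rw [hAdef]
    refine (setIntegral_congr_fun measurableSet_Ioi (fun x hx => ?_)).symm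
    exact Set.indicator_of_mem hx _
  have hBρ : B = ∫ t in Set.Ioi (0:ℝ), ρG t := by
    rw [hBdef]
    refine (setIntegral_congr_fun measurableSet_Ioi (fun x hx => ?_)).symm
    exact Set.indicator_of_mem hx _
  have hCρ : C = ∫ t in Set.Ioi (0:ℝ), ρH t := by
    rw [hCdef]
    refine (setIntegral_congr_fun measurableSet_Ioi (fun x hx => ?_)).symm
    exact Set.indicator_of_mem hx _
  obtain ⟨u, hust, hupos, huae⟩ := ballTransport ρF hρFm hρF0 hρFz hρFi hAρ hFp
  obtain ⟨v, hvst, hvpos, hvae⟩ := ballTransport ρG hρGm hρG0 hρGz hρGi hBρ hGp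
  -- a measurable full-measure subset of Ioo 0 1 where everything holds
  set P : Set ℝ := {x | x ∈ Set.Ioo (0:ℝ) 1 ∧
      (0 < ρF (u x) ∧ HasDerivAt u (A / ρF (u x)) x) ∧
      (0 < ρG (v x) ∧ HasDerivAt v (B / ρG (v x)) x)} with hPdef
  have hPc0 : volume ((Set.Ioo (0:ℝ) 1) ∩ Pᶜ) = 0 := by
    have h1 : ∀ᵐ x ∂volume.restrict (Set.Ioo (0:ℝ) 1), x ∈ P := by
      filter_upwards [huae, hvae, ae_restrict_mem measurableSet_Ioo] with x h1 h2 h3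
      exact ⟨h3, h1, h2⟩
    have h2 := ae_iff.mp h1
    rw [Measure.restrict_apply' measurableSet_Ioo] at h2
    rw [Set.inter_comm]
    exact h2
  set N2 := toMeasurable volume ((Set.Ioo (0:ℝ) 1) ∩ Pᶜ) with hN2def
  have hN2m : MeasurableSet N2 := measurableSet_toMeasurable _ _
  have hN20 : volume N2 = 0 := by rw [hN2def, measure_toMeasurable]; exact hPc0
  set s' := Set.Ioo (0:ℝ) 1 \ N2 with hs'def
  have hs'm : MeasurableSet s' := measurableSet_Ioo.diff hN2m
  have hs'P : s' ⊆ P := by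
    rintro x ⟨hx1, hx2⟩
    by_contra hxP
    exact hx2 (subset_toMeasurable _ _ ⟨hx1, hxP⟩)
  have hs'vol : volume s' = 1 := by
    rw [hs'def, measure_diff_null hN20, Real.volume_Ioo]
    norm_num
  -- the harmonic mean map
  set w : ℝ → ℝ := fun x => 2 * u x * v x / (u x + v x) with hwdef
  set w' : ℝ → ℝ := fun x =>
    2 * ((A / ρF (u x)) * (v x) ^ 2 + (B / ρG (v x)) * (u x) ^ 2) / (u x + v x) ^ 2 with hw'def
  have hw'nonneg : ∀ x ∈ s', 0 ≤ w' x := by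
    intro x hx
    obtain ⟨hxI, ⟨hρFu, hud⟩, ⟨hρGv, hvd⟩⟩ := hs'P hx
    have h1 := hupos x hxI
    have h2 := hvpos x hxI
    have h3 : 0 < A / ρF (u x) := div_pos hFp hρFu
    have h4 : 0 < B / ρG (v x) := div_pos hGp hρGv
    rw [hw'def]
    positivity
  have hwpos : ∀ x ∈ Set.Ioo (0:ℝ) 1, 0 < w x := by
    intro x hx
    have h1 := hupos x hx
    have h2 := hvpos x hx
    rw [hwdef]
    positivity
  have hwderiv : ∀ x ∈ s', HasDerivWithinAt w (w' x) s' x := by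
    intro x hx
    obtain ⟨hxI, ⟨hρFu, hud⟩, ⟨hρGv, hvd⟩⟩ := hs'P hx
    have hu0 := hupos x hxI
    have hv0 := hvpos x hxI
    have hsum : u x + v x ≠ 0 := by positivity
    have h1 : HasDerivAt (fun y => 2 * u y * v y)
        (2 * (A / ρF (u x)) * v x + 2 * u x * (B / ρG (v x))) x :=
      (hud.const_mul (2:ℝ)).mul hvd
    have h2 : HasDerivAt (fun y => u y + v y) (A / ρF (u x) + B / ρG (v x)) x := hud.add hvd
    have h3 := h1.div h2 hsum
    have h4 : ((2 * (A / ρF (u x)) * v x + 2 * u x * (B / ρG (v x))) * (u x + v x) -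
        2 * u x * v x * (A / ρF (u x) + B / ρG (v x))) / (u x + v x) ^ 2 = w' x := by
      rw [hw'def]
      field_simp
      ring
    rw [h4] at h3
    exact h3.hasDerivWithinAt
  have hwmono : StrictMonoOn w s' := by
    intro x hx y hy hxy
    have hxI := (hs'P hx).1
    have hyI := (hs'P hy).1
    have hux := hupos x hxI
    have hvx := hvpos x hxI
    have huy := hupos y hyI
    have hvy := hvpos y hyI
    have hu : u x < u y := hust hxI hyI hxy
    have hv : v x < v y := hvst hxI hyI hxy
    rw [hwdef]
    show 2 * u x * v x / (u x + v x) < 2 * u y * v y / (u y + v y)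
    rw [div_lt_div_iff₀ (by positivity) (by positivity)]
    nlinarith [mul_pos hux huy, mul_pos hvx hvy, mul_pos (mul_pos hux huy) (sub_pos.2 hv),
      mul_pos (mul_pos hvx hvy) (sub_pos.2 hu)]
  have hwinj : Set.InjOn w s' := hwmono.injOn
  -- change of variables
  have hCoV := integral_image_eq_integral_abs_deriv_smul hs'm hwderiv hwinj ρH
  have hIms : w '' s' ⊆ Set.Ioi (0:ℝ) := by
    rintro r ⟨x, hx, rfl⟩
    exact hwpos x (hs'P hx).1
  have hupper : ∫ r in w '' s', ρH r ≤ C := by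
    rw [hCρ]
    refine setIntegral_mono_set hρHi.integrableOn ?_ hIms.eventuallyLE
    exact Filter.Eventually.of_forall (fun r => hρH0 r)
  set K : ℝ := 2 ^ q * (A ^ (-(1/q)) + B ^ (-(1/q))) ^ (-q) with hKdef
  have hptwise : ∀ x ∈ s', K ≤ |w' x| • ρH (w x) := by
    intro x hx
    obtain ⟨hxI, ⟨hρFu, hud⟩, ⟨hρGv, hvd⟩⟩ := hs'P hx
    have hU := hupos x hxI
    have hV := hvpos x hxI
    have hUq : (0:ℝ) < (u x) ^ (q - 1) := rpow_pos_of_pos hU _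
    have hVq : (0:ℝ) < (v x) ^ (q - 1) := rpow_pos_of_pos hV _
    have hρFu' : ρF (u x) = (u x) ^ (q - 1) * F (u x) :=
      Set.indicator_of_mem (Set.mem_Ioi.mpr hU) _
    have hρGv' : ρG (v x) = (v x) ^ (q - 1) * G (v x) :=
      Set.indicator_of_mem (Set.mem_Ioi.mpr hV) _
    have hFU : 0 < F (u x) := by
      rw [hρFu'] at hρFu
      nlinarith
    have hGV : 0 < G (v x) := by
      rw [hρGv'] at hρGv
      nlinarith
    have hwx : 0 < w x := hwpos x hxI
    have hρHw : ρH (w x) = (w x) ^ (q - 1) * H (w x) :=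
      Set.indicator_of_mem (Set.mem_Ioi.mpr hwx) _
    have hharm : 2 / w x = 1 / v x + 1 / u x := by
      rw [hwdef]
      show 2 / (2 * u x * v x / (u x + v x)) = _
      field_simp
    have hHbound := hyp (w x) (v x) (u x) hwx hV hU hharm
    have hkey := ballPointwise (A := A) (B := B) (U := u x) (V := v x)
      (FU := F (u x)) (GV := G (v x)) (HW := H (w x)) hq0 hFp hGp hU hV hFU hGV
      (by
        convert hHbound using 3 <;> ring)
    have hwx_eq : w x = 2 * u x * v x / (u x + v x) := rfl
    have hw'x : w' x = 2 * ((A / ρF (u x)) * (v x) ^ 2 + (B / ρG (v x)) * (u x) ^ 2)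
        / (u x + v x) ^ 2 := rfl
    rw [← hwx_eq] at hkey
    rw [hKdef, smul_eq_mul, abs_of_nonneg (hw'nonneg x hx), hw'x, hρHw, hρFu', hρGv']
    exact hkey
  -- integrate the pointwise bound
  have hint2 : IntegrableOn (fun x => |w' x| • ρH (w x)) s' :=
    (integrableOn_image_iff_integrableOn_abs_deriv_smul hs'm hwderiv hwinj ρH).1
      ((hρHi.integrableOn).mono_set hIms)
  have hconst : ∫ _x in s', K = K := by
    rw [setIntegral_const, measureReal_def, hs'vol]
    simp
  have hlower : K ≤ ∫ x in s', |w' x| • ρH (w x) := by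
    calc K = ∫ _x in s', K := hconst.symm
      _ ≤ ∫ x in s', |w' x| • ρH (w x) := by
          refine setIntegral_mono_on ?_ hint2 hs'm hptwise
          refine integrableOn_const (hs := ?_)
          rw [hs'vol]
          exact ENNReal.one_lt_top.ne
  have hKC : K ≤ C := le_trans (le_trans hlower (le_of_eq hCoV.symm)) hupper
  -- final algebra
  set a : ℝ := A ^ (-(1/q)) with hadef
  set b : ℝ := B ^ (-(1/q)) with hbdef
  have ha : 0 < a := rpow_pos_of_pos hFp _
  have hb : 0 < b := rpow_pos_of_pos hGp _
  have hab : 0 < a + b := by linarith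
  have halt : (2 / (a + b)) ^ q ≤ C := by
    have he : (2 / (a + b)) ^ q = 2 ^ q * (a + b) ^ (-q) := by
      rw [Real.div_rpow (by norm_num) hab.le, Real.rpow_neg hab.le, div_eq_mul_inv]
    rw [he]
    exact hKC
  have h6 : 2 / (a + b) ≤ C ^ (1/q) := by
    have h7 := Real.rpow_le_rpow (by positivity) halt (by positivity : (0:ℝ) ≤ 1/q)
    rwa [← Real.rpow_mul (by positivity), mul_one_div_cancel hq0.ne', Real.rpow_one] at h7
  have hCq : 0 < C ^ (1/q) := rpow_pos_of_pos hHp _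
  show 2 * C ^ (-(1/q)) ≤ a + b
  rw [Real.rpow_neg hHp.le]
  rw [div_le_iff₀ hab] at h6
  calc 2 * (C ^ (1/q))⁻¹ ≤ (C ^ (1/q) * (a + b)) * (C ^ (1/q))⁻¹ := by
        refine mul_le_mul_of_nonneg_right ?_ (inv_nonneg.mpr hCq.le)
        linarith
    _ = a + b := by field_simp
end
end

section
/- Let K ⊂ R^n be a convex body with o, z ∈ int K. Then |(K − z)^o| = ∫_{K^o} (1 − ⟨z, x⟩)^{-(n+1)} dx. -/
open MeasureTheory Real Set
open scoped Pointwise RealInnerProductSpace ENNReal NNReal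

noncomputable section

lemma det_aux {n : ℕ} (a : ℝ) (z x : EuclideanSpace ℝ (Fin n)) :
    ((a • ContinuousLinearMap.id ℝ (EuclideanSpace ℝ (Fin n)))
        + ((a^2) • innerSL ℝ z).smulRight x).det
      = a^n * (1 + a * ⟪z, x⟫) := by
  have hB : (a • ContinuousLinearMap.id ℝ (EuclideanSpace ℝ (Fin n)))
        + ((a^2) • innerSL ℝ z).smulRight x
      = a • (ContinuousLinearMap.id ℝ (EuclideanSpace ℝ (Fin n))
        + ((a • innerSL ℝ z).smulRight x)) := by
    ext h
    simp [smul_smul, sq, ContinuousLinearMap.smulRight_apply, smul_add, mul_assoc]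
  rw [hB]
  have : ((a • (ContinuousLinearMap.id ℝ (EuclideanSpace ℝ (Fin n))
      + ((a • innerSL ℝ z).smulRight x))).det : ℝ)
      = LinearMap.det (a • ((ContinuousLinearMap.id ℝ (EuclideanSpace ℝ (Fin n))
      + ((a • innerSL ℝ z).smulRight x)) : EuclideanSpace ℝ (Fin n) →ₗ[ℝ] _)) := rfl
  rw [this, LinearMap.det_smul, finrank_euclideanSpace_fin]
  congr 1
  set b := (EuclideanSpace.basisFun (Fin n) ℝ).toBasis with hb
  rw [← LinearMap.det_toMatrix b]
  have hM : LinearMap.toMatrix b b ((ContinuousLinearMap.id ℝ (EuclideanSpace ℝ (Fin n))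
      + ((a • innerSL ℝ z).smulRight x)) : EuclideanSpace ℝ (Fin n) →ₗ[ℝ] _)
      = 1 + Matrix.replicateCol (Fin 1) (fun i => x i) * Matrix.replicateRow (Fin 1) (fun j => a * z j) := by
    ext i j
    simp [LinearMap.toMatrix_apply, Matrix.one_apply, Matrix.mul_apply,
      EuclideanSpace.basisFun_apply, Matrix.replicateCol_apply, Matrix.replicateRow_apply, hb,
      EuclideanSpace.inner_single_right]
    ring
  rw [hM]
  erw [Matrix.det_one_add_replicateCol_mul_replicateRow]
  simp [dotProduct, PiLp.inner_apply, RCLike.inner_apply, Finset.mul_sum, mul_comm,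
    mul_assoc, mul_left_comm]

theorem stmt10 {n : ℕ} (K : Set (EuclideanSpace ℝ (Fin n)))
    (hKcomp : IsCompact K) (hKconv : Convex ℝ K) (hKint : (interior K).Nonempty)
    (z : EuclideanSpace ℝ (Fin n)) (h0 : (0 : EuclideanSpace ℝ (Fin n)) ∈ interior K)
    (hz : z ∈ interior K) :
    (volume (polar ((fun x => x - z) '' K))).toReal =
      ∫ x in polar K, ((1 - ⟪z, x⟫) ^ (n + 1))⁻¹ := by
  classical
  set φ : EuclideanSpace ℝ (Fin n) → ℝ := fun x => 1 - ⟪z, x⟫ with hφ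
  set f : EuclideanSpace ℝ (Fin n) → EuclideanSpace ℝ (Fin n) := fun x => (φ x)⁻¹ • x with hf
  set f' : EuclideanSpace ℝ (Fin n) → (EuclideanSpace ℝ (Fin n) →L[ℝ] EuclideanSpace ℝ (Fin n)) := fun x =>
    ((φ x)⁻¹ • ContinuousLinearMap.id ℝ _)
      + ((((φ x)⁻¹)^2) • innerSL ℝ z).smulRight x with hf'
  obtain ⟨rz, hrz, hballz⟩ : ∃ r > 0, Metric.ball z r ⊆ K := by
    rw [mem_interior_iff_mem_nhds, Metric.mem_nhds_iff] at hz
    obtain ⟨ε, hε, h⟩ := hz; exact ⟨ε, hε, h⟩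
  obtain ⟨r0, hr0, hball0⟩ : ∃ r > 0, Metric.ball 0 r ⊆ K := by
    rw [mem_interior_iff_mem_nhds, Metric.mem_nhds_iff] at h0
    obtain ⟨ε, hε, h⟩ := h0; exact ⟨ε, hε, h⟩
  -- positivity of φ on polar K
  have hpos : ∀ x ∈ polar K, 0 < φ x := by
    intro x hx
    rcases eq_or_ne x 0 with rfl | hx0
    · simp [hφ]
    · have hxnorm : 0 < ‖x‖ := norm_pos_iff.2 hx0
      set c : ℝ := rz / (2 * ‖x‖) with hc
      have hcpos : 0 < c := by positivity
      have hk : z + c • x ∈ K := by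
        apply hballz
        simp only [Metric.mem_ball, dist_eq_norm, add_sub_cancel_left, norm_smul,
          Real.norm_eq_abs, abs_of_pos hcpos]
        rw [hc]
        rw [div_mul_eq_mul_div, mul_comm 2 ‖x‖, ← div_div]
        rw [mul_div_assoc, div_self hxnorm.ne', mul_one]
        linarith
      have h1 : ⟪x, z + c • x⟫ ≤ 1 := hx _ hk
      rw [inner_add_right, real_inner_smul_right, real_inner_self_eq_norm_sq] at h1
      have : 0 < c * ‖x‖^2 := by positivity
      have : ⟪x, z⟫ < 1 := by linarith
      rw [real_inner_comm] at this
      simp only [hφ, sub_pos]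
      exact this
  -- positivity of 1 + ⟪z, y⟫ on the polar of the translate
  have hspos : ∀ y ∈ polar ((fun x => x - z) '' K), 0 < 1 + ⟪z, y⟫ := by
    intro y hy
    rcases eq_or_ne y 0 with rfl | hy0
    · simp
    · have hynorm : 0 < ‖y‖ := norm_pos_iff.2 hy0
      set c : ℝ := r0 / (2 * ‖y‖) with hc
      have hcpos : 0 < c := by positivity
      have hk : c • y ∈ K := by
        apply hball0
        simp only [Metric.mem_ball, dist_eq_norm, sub_zero, norm_smul,
          Real.norm_eq_abs, abs_of_pos hcpos]
        rw [hc, div_mul_eq_mul_div, mul_comm 2 ‖y‖, ← div_div]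
        rw [mul_div_assoc, div_self hynorm.ne', mul_one]
        linarith
      have h1 : ⟪y, c • y - z⟫ ≤ 1 := hy _ ⟨c • y, hk, rfl⟩
      rw [inner_sub_right, real_inner_smul_right, real_inner_self_eq_norm_sq] at h1
      have : 0 < c * ‖y‖^2 := by positivity
      have h2 : -1 < ⟪y, z⟫ := by linarith
      rw [real_inner_comm] at h2
      linarith
  -- key algebraic identity
  have hker : ∀ x : EuclideanSpace ℝ (Fin n), φ x ≠ 0 → 1 + ⟪z, f x⟫ = (φ x)⁻¹ := by
    intro x hx
    simp only [hf, real_inner_smul_right]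
    have h : ⟪z, x⟫ = 1 - φ x := by show ⟪z,x⟫ = 1 - (1 - ⟪z,x⟫); ring
    rw [h]
    field_simp
    ring
  -- injectivity
  have hinj : Set.InjOn f (polar K) := by
    intro x hx y hy hxy
    have hx' := (hpos x hx).ne'
    have hy' := (hpos y hy).ne'
    have : (1 + ⟪z, f x⟫)⁻¹ • f x = (1 + ⟪z, f y⟫)⁻¹ • f y := by rw [hxy]
    rw [hker x hx', hker y hy', inv_inv, inv_inv, hf] at this
    simpa [smul_smul, mul_inv_cancel₀ hx', mul_inv_cancel₀ hy'] using this
  -- image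
  have himage : f '' polar K = polar ((fun x => x - z) '' K) := by
    ext y
    constructor
    · rintro ⟨x, hx, rfl⟩
      rintro w ⟨k, hk, rfl⟩
      have hφx := hpos x hx
      simp only [hf, real_inner_smul_left]
      have h1 : ⟪x, k⟫ ≤ 1 := hx _ hk
      have h2 : ⟪x, k - z⟫ ≤ 1 - ⟪x, z⟫ := by
        rw [inner_sub_right]; linarith
      have hzx : φ x = 1 - ⟪x, z⟫ := by rw [hφ, real_inner_comm]
      calc (φ x)⁻¹ * ⟪x, k - z⟫ ≤ (φ x)⁻¹ * (1 - ⟪x, z⟫) := by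
            apply mul_le_mul_of_nonneg_left h2 (le_of_lt (by positivity))
        _ = 1 := by rw [← hzx, inv_mul_cancel₀ hφx.ne']
    · intro hy
      have hs := hspos y hy
      set s : ℝ := 1 + ⟪z, y⟫ with hsdef
      refine ⟨s⁻¹ • y, ?_, ?_⟩
      · intro k hk
        have h1 : ⟪y, k - z⟫ ≤ 1 := hy _ ⟨k, hk, rfl⟩
        rw [inner_sub_right] at h1
        have hzy : ⟪y, z⟫ = ⟪z, y⟫ := real_inner_comm _ _
        rw [real_inner_smul_left]
        have h2 : ⟪y, k⟫ ≤ s := by rw [hsdef]; linarith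
        calc s⁻¹ * ⟪y, k⟫ ≤ s⁻¹ * s := by
              apply mul_le_mul_of_nonneg_left h2 (le_of_lt (by positivity))
          _ = 1 := inv_mul_cancel₀ hs.ne'
      · have hφs : φ (s⁻¹ • y) = s⁻¹ := by
          show 1 - ⟪z, s⁻¹ • y⟫ = s⁻¹
          rw [real_inner_smul_right]
          have h : ⟪z, y⟫ = s - 1 := by rw [hsdef]; ring
          rw [h, mul_sub, mul_one, inv_mul_cancel₀ hs.ne']
          ring
        simp only [hf, hφs, inv_inv, smul_smul]
        rw [mul_inv_cancel₀ hs.ne', one_smul]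
  -- measurability
  have hclosed : IsClosed (polar K) := by
    have : polar K = ⋂ k ∈ K, {y : EuclideanSpace ℝ (Fin n) | ⟪y, k⟫ ≤ 1} := by
      ext y; simp [polar]
    rw [this]
    exact isClosed_biInter fun k _ =>
      isClosed_le (Continuous.inner continuous_id continuous_const) continuous_const
  have hmeas : MeasurableSet (polar K) := hclosed.measurableSet
  -- derivative
  have hderiv : ∀ x ∈ polar K, HasFDerivWithinAt f (f' x) (polar K) x := by
    intro x hx
    have hφd : HasFDerivAt φ (-(innerSL ℝ z)) x := by
      simpa using ((innerSL ℝ z).hasFDerivAt (x := x)).const_sub 1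
    have hinvd := (hasDerivAt_inv (hpos x hx).ne').comp_hasFDerivAt x hφd
    have := hinvd.smul (hasFDerivAt_id x)
    have heq : ((fun y : ℝ => y⁻¹) ∘ φ) x • ContinuousLinearMap.id ℝ (EuclideanSpace ℝ (Fin n))
        + ((-(φ x ^ 2)⁻¹) • (-(innerSL ℝ z))).smulRight (id x) = f' x := by
      simp only [Function.comp_apply, id_eq]
      rw [hf']
      congr 1
      rw [neg_smul, smul_neg, neg_neg, inv_pow]
    rw [heq] at this
    exact this.hasFDerivWithinAt
  -- determinant
  have hdet : ∀ x ∈ polar K, |(f' x).det| = ((1 - ⟪z, x⟫) ^ (n + 1))⁻¹ := by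
    intro x hx
    have hφx := hpos x hx
    rw [hf', det_aux]
    have h1 : 1 + (φ x)⁻¹ * ⟪z, x⟫ = (φ x)⁻¹ := by
      have h : ⟪z, x⟫ = 1 - φ x := by show ⟪z,x⟫ = 1 - (1 - ⟪z,x⟫); ring
      rw [h]
      field_simp
      ring
    rw [h1, ← pow_succ]
    all_goals rw [abs_of_pos (pow_pos (inv_pos.2 hφx) (n+1)), ← inv_pow]
  -- put everything together
  have hLHS : (volume (polar ((fun x => x - z) '' K))).toReal
      = ∫ y in polar ((fun x => x - z) '' K), (1 : ℝ) := by
    rw [setIntegral_const, smul_eq_mul, mul_one]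
    rfl
  rw [hLHS, ← himage,
    integral_image_eq_integral_abs_det_fderiv_smul volume hmeas hderiv hinj]
  apply setIntegral_congr_fun hmeas
  intro x hx
  simp only [smul_eq_mul, mul_one]
  exact hdet x hx
end
end

section
/- Let μ be a probability measure on R^n and φ : R^n → [0,∞) a log-concave function with finite positive integral ∫ φ dμ. Then ∫_{R^n} φ(x) dμ(x) ≤ φ( ∫_{R^n} x · φ(x)/(∫ φ dμ) dμ(x) ), i.e., the integral of φ is at most the value of φ at the φ-weighted barycenter. -/
open MeasureTheory Real Set
open scoped Pointwise RealInnerProductSpace ENNReal NNReal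

noncomputable section

/-- Supporting hyperplane for a convex function at an interior point of its domain. -/
lemma support_at_interior_point {F : Type*} [NormedAddCommGroup F] [NormedSpace ℝ F]
    [FiniteDimensional ℝ F] {T : Set F} {ψ : F → ℝ} (hT : Convex ℝ T)
    (hψ : ConvexOn ℝ T ψ) {b : F} (hb : b ∈ interior T) :
    ∃ L : F →L[ℝ] ℝ, ∀ x ∈ T, ψ b + L (x - b) ≤ ψ x := by
  have hU : IsOpen (interior T) := isOpen_interior
  have hUc : Convex ℝ (interior T) := hT.interior
  have hcont : ContinuousOn ψ (interior T) := hψ.continuousOn_interior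
  set O : Set (F × ℝ) := {q | q.1 ∈ interior T ∧ ψ q.1 < q.2} with hO
  have hOopen : IsOpen O := by
    have h1 : ContinuousOn (fun q : F × ℝ => ψ q.1 - q.2)
        ((interior T) ×ˢ (univ : Set ℝ)) := by
      apply ContinuousOn.sub
      · exact hcont.comp continuous_fst.continuousOn (fun q hq => hq.1)
      · exact continuous_snd.continuousOn
    have h2 : IsOpen (((interior T) ×ˢ (univ : Set ℝ)) ∩
        (fun q : F × ℝ => ψ q.1 - q.2) ⁻¹' (Iio (0:ℝ))) :=
      h1.isOpen_inter_preimage (hU.prod isOpen_univ) isOpen_Iio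
    convert h2 using 1
    ext q
    simp only [hO, Set.mem_setOf_eq, Set.mem_inter_iff, Set.mem_prod, Set.mem_univ, and_true,
      Set.mem_preimage, Set.mem_Iio, sub_neg]
  have hOconv : Convex ℝ O := by
    rintro ⟨x, s⟩ ⟨hx, hs⟩ ⟨y, t⟩ ⟨hy, ht⟩ a c ha hc hac
    simp only [hO, Set.mem_setOf_eq, Prod.smul_mk, Prod.mk_add_mk, smul_eq_mul] at *
    refine ⟨hUc hx hy ha hc hac, ?_⟩
    have h2 := hψ.2 (interior_subset hx) (interior_subset hy) ha hc hac
    simp only [smul_eq_mul] at h2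
    have h3 : a * ψ x ≤ a * s := mul_le_mul_of_nonneg_left hs.le ha
    have h4 : c * ψ y ≤ c * t := mul_le_mul_of_nonneg_left ht.le hc
    have h5 : a * ψ x + c * ψ y < a * s + c * t := by
      rcases ha.eq_or_lt with h0 | h0
      · have hc1 : 0 < c := by linarith
        have := mul_lt_mul_of_pos_left ht hc1
        linarith
      · have := mul_lt_mul_of_pos_left hs h0
        linarith
    exact lt_of_le_of_lt h2 h5
  have hdisj : ((b, ψ b) : F × ℝ) ∉ O := fun h => lt_irrefl _ h.2
  obtain ⟨g, hg⟩ := geometric_hahn_banach_open_point hOconv hOopen hdisj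
  set h : F →L[ℝ] ℝ := g.comp (ContinuousLinearMap.inl ℝ F ℝ) with hh
  set c0 : ℝ := g (0, 1) with hc0def
  have hsplit : ∀ (x : F) (t : ℝ), g (x, t) = h x + t * c0 := by
    intro x t
    have hxt : ((x, t) : F × ℝ) = (x, 0) + t • ((0 : F), (1 : ℝ)) := by
      simp [Prod.ext_iff]
    rw [hxt, g.map_add, g.map_smul]
    simp only [hh, hc0def, ContinuousLinearMap.comp_apply, ContinuousLinearMap.inl_apply,
      smul_eq_mul]
  have hc0 : c0 < 0 := by
    have hbO : ((b, ψ b + 1) : F × ℝ) ∈ O := ⟨hb, by show ψ b < ψ b + 1; linarith⟩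
    have := hg _ hbO
    rw [hsplit, hsplit] at this
    have h2 : (ψ b + 1) * c0 = ψ b * c0 + c0 := by ring
    linarith
  have key : ∀ x ∈ interior T, h x + ψ x * c0 ≤ h b + ψ b * c0 := by
    intro x hx
    have hε : ∀ ε : ℝ, 0 < ε → h x + (ψ x + ε) * c0 < h b + ψ b * c0 := by
      intro ε hε
      have := hg (x, ψ x + ε) ⟨hx, by show ψ x < ψ x + ε; linarith⟩
      rw [hsplit, hsplit] at this
      linarith
    by_contra hcon
    push_neg at hcon
    set δ : ℝ := (h x + ψ x * c0) - (h b + ψ b * c0) with hδ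
    have hδpos : 0 < δ := by simp [hδ]; linarith
    have hc0' : (0:ℝ) < -c0 := by linarith
    have hc0ne : c0 ≠ 0 := by linarith
    have h1 := hε (δ / (2 * (-c0))) (by positivity)
    have h2 : (δ / (2 * (-c0))) * c0 = -(δ/2) := by
      field_simp
    have h3 : (ψ x + δ / (2 * (-c0))) * c0 = ψ x * c0 + (δ / (2 * (-c0))) * c0 := by ring
    rw [h3, h2] at h1
    simp only [hδ] at h1 hδpos
    linarith
  have keyT : ∀ x ∈ T, h x + ψ x * c0 ≤ h b + ψ b * c0 := by
    intro x hx
    have hm : (1/2 : ℝ) • b + (1/2 : ℝ) • x ∈ interior T :=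
      hT.combo_interior_self_mem_interior hb hx (by norm_num) (by norm_num) (by norm_num)
    have h1 := key _ hm
    have hψm : ψ ((1/2:ℝ) • b + (1/2:ℝ) • x) ≤ (1/2) * ψ b + (1/2) * ψ x := by
      have := hψ.2 (interior_subset hb) hx (by norm_num : (0:ℝ) ≤ 1/2)
        (by norm_num : (0:ℝ) ≤ 1/2) (by norm_num)
      simpa [smul_eq_mul] using this
    have hhm : h ((1/2:ℝ) • b + (1/2:ℝ) • x) = (1/2) * h b + (1/2) * h x := by
      rw [h.map_add, h.map_smul, h.map_smul]
      simp [smul_eq_mul]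
    have hmul : ψ ((1/2:ℝ) • b + (1/2:ℝ) • x) * c0 ≥ ((1/2) * ψ b + (1/2) * ψ x) * c0 :=
      mul_le_mul_of_nonpos_right hψm hc0.le
    rw [hhm] at h1
    nlinarith
  refine ⟨(-c0)⁻¹ • h, fun x hx => ?_⟩
  have hk := keyT x hx
  have hL : ((-c0)⁻¹ • h) (x - b) = (-c0)⁻¹ * (h x - h b) := by
    rw [map_sub]
    simp [smul_eq_mul]
    ring
  rw [hL]
  have hc0' : (0:ℝ) < -c0 := by linarith
  have h2 : h x - h b ≤ (-c0) * (ψ x - ψ b) := by nlinarith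
  have h3 : (-c0)⁻¹ * (h x - h b) ≤ ψ x - ψ b := by
    rw [inv_mul_le_iff₀ hc0']
    nlinarith
  linarith

/-- The preimage of a convex set under `v ↦ p₀ + v` is convex. -/
lemma T_convex {E : Type*} [NormedAddCommGroup E] [NormedSpace ℝ E]
    {S : Set E} (hS : Convex ℝ S) (p₀ : E) (V : Submodule ℝ E) :
    Convex ℝ {v : V | p₀ + ↑v ∈ S} := by
  intro v hv w hw a c ha hc hac
  have hco : p₀ + ((a • v + c • w : V) : E) = a • (p₀ + ↑v) + c • (p₀ + ↑w) := by
    push_cast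
    rw [smul_add, smul_add]
    have h1 : a • p₀ + c • p₀ = p₀ := by rw [← add_smul, hac, one_smul]
    rw [show a • p₀ + a • (v:E) + (c • p₀ + c • (w:E))
        = (a • p₀ + c • p₀) + (a • (v:E) + c • (w:E)) by abel, h1]
  show p₀ + ((a • v + c • w : V) : E) ∈ S
  rw [hco]
  exact hS hv hw ha hc hac

lemma T_convexOn {E : Type*} [NormedAddCommGroup E] [NormedSpace ℝ E]
    {S : Set E} {ψ : E → ℝ} (hψ : ConvexOn ℝ S ψ) (p₀ : E) (V : Submodule ℝ E) :
    ConvexOn ℝ {v : V | p₀ + ↑v ∈ S} (fun v : V => ψ (p₀ + ↑v)) := by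
  refine ⟨T_convex hψ.1 p₀ V, fun v hv w hw a c ha hc hac => ?_⟩
  have hco : p₀ + ((a • v + c • w : V) : E) = a • (p₀ + ↑v) + c • (p₀ + ↑w) := by
    push_cast
    rw [smul_add, smul_add]
    have h1 : a • p₀ + c • p₀ = p₀ := by rw [← add_smul, hac, one_smul]
    rw [show a • p₀ + a • (v:E) + (c • p₀ + c • (w:E))
        = (a • p₀ + c • p₀) + (a • (v:E) + c • (w:E)) by abel, h1]
  simp only
  rw [hco]
  exact hψ.2 hv hw ha hc hac

/-- The local-coordinates domain has nonempty interior in the direction span. -/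
lemma T_interior_nonempty {E : Type*} [NormedAddCommGroup E] [NormedSpace ℝ E]
    [FiniteDimensional ℝ E] {S : Set E} (hS : Convex ℝ S) {p₀ : E} (hp₀ : p₀ ∈ S) :
    (interior {v : vectorSpan ℝ S | p₀ + ↑v ∈ S}).Nonempty := by
  set V : Submodule ℝ E := vectorSpan ℝ S with hV
  set T : Set V := {v : V | p₀ + ↑v ∈ S} with hT
  have hTconv : Convex ℝ T := T_convex hS p₀ V
  have h0T : (0 : V) ∈ T := by simp [hT, hp₀]
  have hspan : vectorSpan ℝ T = (⊤ : Submodule ℝ V) := by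
    rw [Submodule.eq_top_iff']
    intro u
    have hu : (u : E) ∈ Submodule.span ℝ (S -ᵥ S) := by
      have h1 : (u : E) ∈ vectorSpan ℝ S := u.2
      rwa [vectorSpan_def] at h1
    have key : Submodule.span ℝ (S -ᵥ S) ≤ Submodule.map V.subtype (vectorSpan ℝ T) := by
      rw [Submodule.span_le]
      rintro z hz
      rw [Set.mem_vsub] at hz
      obtain ⟨x, hx, y, hy, rfl⟩ := hz
      have hxv : x - p₀ ∈ V := by
        rw [hV]
        simpa [vsub_eq_sub] using vsub_mem_vectorSpan ℝ hx hp₀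
      have hyv : y - p₀ ∈ V := by
        rw [hV]
        simpa [vsub_eq_sub] using vsub_mem_vectorSpan ℝ hy hp₀
      have hxT : (⟨x - p₀, hxv⟩ : V) ∈ T := by
        show p₀ + (x - p₀) ∈ S
        rwa [show p₀ + (x - p₀) = x by abel]
      have hyT : (⟨y - p₀, hyv⟩ : V) ∈ T := by
        show p₀ + (y - p₀) ∈ S
        rwa [show p₀ + (y - p₀) = y by abel]
      refine ⟨(⟨x - p₀, hxv⟩ : V) - ⟨y - p₀, hyv⟩, ?_, ?_⟩
      · have := vsub_mem_vectorSpan ℝ hxT hyT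
        simpa [vsub_eq_sub] using this
      · show ((⟨x - p₀, hxv⟩ : V) - ⟨y - p₀, hyv⟩ : V).1 = x -ᵥ y
        simp only [AddSubgroupClass.coe_sub, vsub_eq_sub]
        abel
    obtain ⟨w, hw, hwe⟩ := key hu
    have hwu : w = u := Subtype.ext (by simpa using hwe)
    rwa [hwu] at hw
  have haff : affineSpan ℝ T = ⊤ :=
    (AffineSubspace.affineSpan_eq_top_iff_vectorSpan_eq_top_of_nonempty ℝ ↥V ↥V ⟨0, h0T⟩).mpr hspan
  exact hTconv.interior_nonempty_iff_affineSpan_eq_top.mpr haff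

/-- Every real-valued convex function on a convex set admits a continuous affine minorant. -/
lemma exists_affine_minorant {E : Type*} [NormedAddCommGroup E] [InnerProductSpace ℝ E]
    [FiniteDimensional ℝ E] {S : Set E} {ψ : E → ℝ} (hS : Convex ℝ S) (hne : S.Nonempty)
    (hψ : ConvexOn ℝ S ψ) :
    ∃ (u : E →L[ℝ] ℝ) (c : ℝ), ∀ x ∈ S, c + u x ≤ ψ x := by
  obtain ⟨p₀, hp₀⟩ := hne
  set V : Submodule ℝ E := vectorSpan ℝ S with hV
  set T : Set V := {v : V | p₀ + ↑v ∈ S} with hT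
  have hTconv : Convex ℝ T := T_convex hS p₀ V
  have hψT : ConvexOn ℝ T (fun v : V => ψ (p₀ + ↑v)) := T_convexOn hψ p₀ V
  obtain ⟨a₀, ha₀⟩ := T_interior_nonempty hS hp₀
  obtain ⟨L, hL⟩ := support_at_interior_point hTconv hψT ha₀
  set u : E →L[ℝ] ℝ := L.comp (Submodule.orthogonalProjection V) with hu
  have huv : ∀ (z : E) (hz : z ∈ V), u z = L ⟨z, hz⟩ := by
    intro z hz
    have h1 : (Submodule.orthogonalProjection V) z = ⟨z, hz⟩ := by
      apply Subtype.ext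
      simpa using Submodule.starProjection_eq_self_iff.mpr hz
    simp [hu, h1]
  refine ⟨u, ψ (p₀ + ↑a₀) - L a₀ - u p₀, fun x hx => ?_⟩
  have hxv : x - p₀ ∈ V := by
    rw [hV]
    simpa [vsub_eq_sub] using vsub_mem_vectorSpan ℝ hx hp₀
  have hxT : (⟨x - p₀, hxv⟩ : V) ∈ T := by
    show p₀ + (x - p₀) ∈ S
    rwa [show p₀ + (x - p₀) = x by abel]
  have h1 := hL _ hxT
  have h2 : ψ (p₀ + ((⟨x - p₀, hxv⟩ : V) : E)) = ψ x := by
    rw [show p₀ + ((⟨x - p₀, hxv⟩ : V) : E) = x by simp]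
  have h3 : L ((⟨x - p₀, hxv⟩ : V) - a₀) = L ⟨x - p₀, hxv⟩ - L a₀ := map_sub L _ _
  have h4 : L (⟨x - p₀, hxv⟩ : V) = u (x - p₀) := (huv _ hxv).symm
  have h5 : u (x - p₀) = u x - u p₀ := by rw [map_sub]
  simp only [h2] at h1
  rw [h3, h4, h5] at h1
  linarith

set_option maxHeartbeats 1000000 in
/-- Jensen's inequality for the barycenter of a probability measure supported on an arbitrary
convex set (no closedness assumption), including the fact that the barycenter lies in the set. -/
lemma jensen_barycenter {E : Type*} [NormedAddCommGroup E] [InnerProductSpace ℝ E]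
    [FiniteDimensional ℝ E] [MeasurableSpace E] [BorelSpace E]
    (ν : Measure E) [IsProbabilityMeasure ν] :
    ∀ (d : ℕ) (S : Set E) (ψ : E → ℝ), Module.finrank ℝ (vectorSpan ℝ S) ≤ d →
      Convex ℝ S → (∀ᵐ x ∂ν, x ∈ S) → ConvexOn ℝ S ψ →
      Integrable (fun x => x) ν → Integrable ψ ν →
      (∫ x, x ∂ν) ∈ S ∧ ψ (∫ x, x ∂ν) ≤ ∫ x, ψ x ∂ν := by
  intro d
  induction d using Nat.strong_induction_on with
  | _ d IH =>
  intro S ψ hd hS hmem hψ hid hψi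
  have hSne : S.Nonempty := by
    rcases S.eq_empty_or_nonempty with h | h
    · exfalso
      rw [h] at hmem
      rw [ae_iff] at hmem
      simp only [Set.mem_empty_iff_false, not_false_eq_true] at hmem
      simp only [Set.setOf_true] at hmem
      have h1 : ν Set.univ = 1 := measure_univ
      rw [hmem] at h1
      exact zero_ne_one h1
    · exact h
  obtain ⟨p₀, hp₀⟩ := hSne
  have hxV : ∀ {x}, x ∈ S → x - p₀ ∈ vectorSpan ℝ S := fun {x} hx => by
    simpa [vsub_eq_sub] using vsub_mem_vectorSpan ℝ hx hp₀
  set b : E := ∫ x, x ∂ν with hbdef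
  have hsub : Integrable (fun x => x - p₀) ν := hid.sub (integrable_const _)
  have hintsub : ∫ x, (x - p₀) ∂ν = b - p₀ := by
    rw [integral_sub hid (integrable_const _), integral_const, probReal_univ, one_smul]
  set Q : E →L[ℝ] E :=
    (Submodule.subtypeL (vectorSpan ℝ S)).comp (Submodule.orthogonalProjection (vectorSpan ℝ S)) with hQdef
  have hQmem : ∀ z, Q z ∈ vectorSpan ℝ S := fun z => by
    show ((Submodule.orthogonalProjection (vectorSpan ℝ S)) z : E) ∈ vectorSpan ℝ S
    exact Submodule.coe_mem _
  have hQid : ∀ z ∈ vectorSpan ℝ S, Q z = z := fun z hz => by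
    show ((Submodule.orthogonalProjection (vectorSpan ℝ S)) z : E) = z
    exact Submodule.starProjection_eq_self_iff.mpr hz
  have hbV : b - p₀ ∈ vectorSpan ℝ S := by
    have h1 : ∫ x, Q (x - p₀) ∂ν = Q (b - p₀) := by
      rw [← hintsub]
      exact Q.integral_comp_comm hsub
    have h2 : (fun x => Q (x - p₀)) =ᵐ[ν] fun x => x - p₀ :=
      hmem.mono fun x hx => hQid _ (hxV hx)
    have h3 : ∫ x, Q (x - p₀) ∂ν = b - p₀ := by rw [integral_congr_ae h2, hintsub]
    rw [h3] at h1
    rw [h1]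
    exact hQmem _
  set V : Submodule ℝ E := vectorSpan ℝ S with hV
  set T : Set V := {v : V | p₀ + ↑v ∈ S} with hT
  have hTconv : Convex ℝ T := T_convex hS p₀ V
  have hψT : ConvexOn ℝ T (fun v : V => ψ (p₀ + ↑v)) := T_convexOn hψ p₀ V
  have hTint : (interior T).Nonempty := T_interior_nonempty hS hp₀
  set bh : V := ⟨b - p₀, hbV⟩ with hbh
  have hbeq : p₀ + (bh : E) = b := by simp [hbh]
  have huval : ∀ (L : V →L[ℝ] ℝ) (z : E) (hz : z ∈ V),
      (L.comp (Submodule.orthogonalProjection V)) z = L ⟨z, hz⟩ := by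
    intro L z hz
    have h1 : (Submodule.orthogonalProjection V) z = ⟨z, hz⟩ := by
      apply Subtype.ext
      simpa using Submodule.starProjection_eq_self_iff.mpr hz
    simp [h1]
  by_cases hbint : bh ∈ interior T
  · -- interior case : supporting hyperplane at the barycenter
    obtain ⟨L, hL⟩ := support_at_interior_point hTconv hψT hbint
    set u : E →L[ℝ] ℝ := L.comp (Submodule.orthogonalProjection V) with hu
    have hbS : b ∈ S := by
      rw [← hbeq]
      have h6 : bh ∈ T := interior_subset hbint
      exact h6
    have hkey : ∀ x ∈ S, ψ b + u (x - b) ≤ ψ x := by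
      intro x hx
      have hxv : x - p₀ ∈ V := hxV hx
      have hxT : (⟨x - p₀, hxv⟩ : V) ∈ T := by
        show p₀ + (x - p₀) ∈ S
        rwa [show p₀ + (x - p₀) = x by abel]
      have h1 := hL _ hxT
      have hxb : x - b ∈ V := by
        have := V.sub_mem hxv hbV
        rwa [show (x - p₀) - (b - p₀) = x - b by abel] at this
      have hsubeq : (⟨x - p₀, hxv⟩ : V) - bh = ⟨x - b, hxb⟩ := by
        apply Subtype.ext
        show (x - p₀) - (b - p₀) = x - b
        abel
      have h2 : ψ (p₀ + ((⟨x - p₀, hxv⟩ : V) : E)) = ψ x := by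
        rw [show p₀ + ((⟨x - p₀, hxv⟩ : V) : E) = x by simp]
      have h3 : ψ (p₀ + (bh : E)) = ψ b := by rw [hbeq]
      have h4 : L ((⟨x - p₀, hxv⟩ : V) - bh) = u (x - b) := by
        rw [hsubeq, hu, huval L (x - b) hxb]
      simp only [h2, h3, h4] at h1
      exact h1
    refine ⟨hbS, ?_⟩
    have hint1 : Integrable (fun x => u (x - b)) ν :=
      u.integrable_comp (hid.sub (integrable_const _))
    have hae : ∀ᵐ x ∂ν, 0 ≤ ψ x - ψ b - u (x - b) :=
      hmem.mono fun x hx => by have := hkey x hx; linarith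
    have h0 : 0 ≤ ∫ x, (ψ x - ψ b - u (x - b)) ∂ν := integral_nonneg_of_ae hae
    have hib : ∫ x, (x - b) ∂ν = 0 := by
      rw [integral_sub hid (integrable_const _), integral_const, probReal_univ, one_smul, ← hbdef, sub_self]
    have hintu : ∫ x, u (x - b) ∂ν = 0 := by
      have h1 : ∫ x, u (x - b) ∂ν = u (∫ x, (x - b) ∂ν) :=
        u.integral_comp_comm (hid.sub (integrable_const _))
      rw [h1, hib, map_zero]
    have hi1 : Integrable (fun x => ψ x - ψ b) ν := hψi.sub (integrable_const _)
    have hcalc : ∫ x, (ψ x - ψ b - u (x - b)) ∂ν = (∫ x, ψ x ∂ν) - ψ b := by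
      rw [integral_sub hi1 hint1, integral_sub hψi (integrable_const _), integral_const,
        probReal_univ, one_smul, hintu, sub_zero]
    rw [hcalc] at h0
    linarith
  · -- boundary case : the measure concentrates on a proper face; induct on dimension
    obtain ⟨g, hg⟩ := geometric_hahn_banach_open_point hTconv.interior isOpen_interior hbint
    obtain ⟨a₀, ha₀⟩ := hTint
    have hgle : ∀ v ∈ T, g v ≤ g bh := by
      intro v hv
      by_contra hcon
      push_neg at hcon
      have hcombo : ∀ s : ℝ, 0 < s → s ≤ 1/2 → s • a₀ + (1 - s) • v ∈ interior T :=
        fun s hs hs2 =>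
        hTconv.combo_interior_self_mem_interior ha₀ hv hs (by linarith) (by ring)
      have hineq : ∀ s : ℝ, 0 < s → s ≤ 1/2 → g v - g bh < s * (g v - g a₀) := by
        intro s hs hs2
        have h1 := hg _ (hcombo s hs hs2)
        rw [g.map_add, g.map_smul, g.map_smul] at h1
        simp only [smul_eq_mul] at h1
        nlinarith
      rcases le_or_gt (g v - g a₀) 0 with hA | hA
      · have := hineq (1/2) one_half_pos le_rfl
        nlinarith
      · set s0 : ℝ := min (1/2) ((g v - g bh)/(2*(g v - g a₀))) with hs0
        have hs0pos : 0 < s0 := lt_min one_half_pos (div_pos (by linarith) (by linarith))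
        have h1 := hineq s0 hs0pos (min_le_left _ _)
        have h2 : s0 * (g v - g a₀) ≤ (g v - g bh)/2 := by
          calc s0 * (g v - g a₀) ≤ ((g v - g bh)/(2*(g v - g a₀))) * (g v - g a₀) :=
                mul_le_mul_of_nonneg_right (min_le_right _ _) hA.le
            _ = (g v - g bh)/2 := by
                have hAne : g v - g a₀ ≠ 0 := ne_of_gt hA
                field_simp
        nlinarith
    set u : E →L[ℝ] ℝ := g.comp (Submodule.orthogonalProjection V) with hu
    have hub : ∀ x ∈ S, u x ≤ u b := by
      intro x hx
      have hxv : x - p₀ ∈ V := hxV hx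
      have hxT : (⟨x - p₀, hxv⟩ : V) ∈ T := by
        show p₀ + (x - p₀) ∈ S
        rwa [show p₀ + (x - p₀) = x by abel]
      have h1 : u x - u b = g ((⟨x - p₀, hxv⟩ : V)) - g bh := by
        have hxb : x - b ∈ V := by
          have := V.sub_mem hxv hbV
          rwa [show (x - p₀) - (b - p₀) = x - b by abel] at this
        have e1 : u x - u b = u (x - b) := by rw [map_sub]
        have e2 : u (x - b) = g ⟨x - b, hxb⟩ := huval g (x - b) hxb
        have e3 : (⟨x - b, hxb⟩ : V) = (⟨x - p₀, hxv⟩ : V) - bh := by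
          apply Subtype.ext
          show x - b = (x - p₀) - (b - p₀)
          abel
        rw [e1, e2, e3, map_sub]
      have h2 := hgle _ hxT
      linarith
    have haeu : ∀ᵐ x ∂ν, 0 ≤ u b - u x := hmem.mono fun x hx => sub_nonneg.2 (hub x hx)
    have hiux : Integrable (fun x => u x) ν := u.integrable_comp hid
    have hiu : Integrable (fun x => u b - u x) ν := (integrable_const _).sub hiux
    have hzero : ∫ x, (u b - u x) ∂ν = 0 := by
      have h1 : ∫ x, u x ∂ν = u b := by
        have h2 : ∫ x, u x ∂ν = u (∫ x, x ∂ν) := u.integral_comp_comm hid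
        rw [h2, ← hbdef]
      rw [integral_sub (integrable_const _) hiux, integral_const,
        probReal_univ, one_smul, h1, sub_self]
    have haeeq : (fun x => u b - u x) =ᵐ[ν] 0 :=
      (integral_eq_zero_iff_of_nonneg_ae haeu hiu).mp hzero
    set S' : Set E := {x ∈ S | u x = u b} with hS'
    have hmem' : ∀ᵐ x ∂ν, x ∈ S' := by
      filter_upwards [hmem, haeeq] with x h1 h2
      refine ⟨h1, ?_⟩
      have : u b - u x = 0 := h2
      linarith
    have hS'conv : Convex ℝ S' := by
      apply hS.inter
      intro x hx y hy a c ha hc hac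
      show u (a • x + c • y) = u b
      rw [u.map_add, u.map_smul, u.map_smul]
      simp only [smul_eq_mul]
      have hx' : u x = u b := hx
      have hy' : u y = u b := hy
      rw [hx', hy', ← add_mul, hac, one_mul]
    have hle : vectorSpan ℝ S' ≤ V := by
      rw [hV]
      exact vectorSpan_mono ℝ (fun x hx => hx.1)
    have hker : ∀ z ∈ vectorSpan ℝ S', u z = 0 := by
      intro z hz
      rw [vectorSpan_def] at hz
      induction hz using Submodule.span_induction with
      | mem w hw =>
        rw [Set.mem_vsub] at hw
        obtain ⟨x, hx, y, hy, rfl⟩ := hw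
        show u (x -ᵥ y) = 0
        rw [vsub_eq_sub, u.map_sub, hx.2, hy.2, sub_self]
      | zero => exact u.map_zero
      | add a b _ _ ha hb => rw [u.map_add, ha, hb, add_zero]
      | smul r a _ ha => rw [u.map_smul, ha, smul_zero]
    have hne : vectorSpan ℝ S' ≠ V := by
      intro heq
      have hmem2 : ((bh - a₀ : V) : E) ∈ vectorSpan ℝ S' := by
        rw [heq]
        exact Submodule.coe_mem _
      have h0 : u ((bh - a₀ : V) : E) = 0 := hker _ hmem2
      have hval : u ((bh - a₀ : V) : E) = g (bh - a₀) := by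
        rw [hu, huval g _ (Submodule.coe_mem _)]
      have h5 : 0 < g (bh - a₀) := by
        have := hg a₀ ha₀
        rw [map_sub]
        linarith
      rw [hval] at h0
      linarith
    have hlt : vectorSpan ℝ S' < V := lt_of_le_of_ne hle hne
    have hrank : Module.finrank ℝ (vectorSpan ℝ S') < d :=
      lt_of_lt_of_le (Submodule.finrank_lt_finrank_of_lt hlt) hd
    obtain ⟨hbS', hineq⟩ := IH _ hrank S' ψ le_rfl hS'conv hmem'
      (hψ.subset (fun x hx => hx.1) hS'conv) hid hψi
    exact ⟨hbS'.1, hineq⟩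

set_option maxHeartbeats 1000000 in
theorem stmt17' {n : ℕ} (μ : Measure (EuclideanSpace ℝ (Fin n))) [IsProbabilityMeasure μ]
    (φ : EuclideanSpace ℝ (Fin n) → ℝ) (hφ0 : ∀ x, 0 ≤ φ x)
    (hφlc : ∀ x y : EuclideanSpace ℝ (Fin n), ∀ a b : ℝ, 0 ≤ a → 0 ≤ b → a + b = 1 →
      φ x ^ a * φ y ^ b ≤ φ (a • x + b • y))
    (hφi : Integrable φ μ) (hφpos : 0 < ∫ x, φ x ∂μ)
    (hxi : Integrable (fun x => φ x • x) μ) :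
    ∫ x, φ x ∂μ ≤ φ ((∫ x, φ x ∂μ)⁻¹ • ∫ x, φ x • x ∂μ) := by
  classical
  set I : ℝ := ∫ x, φ x ∂μ with hIdef
  have hI : 0 < I := hφpos
  set S : Set (EuclideanSpace ℝ (Fin n)) := {x | 0 < φ x} with hSdef
  have hSconv : Convex ℝ S := by
    intro x hx y hy a c ha hc hac
    have h := hφlc x y a c ha hc hac
    have hp : 0 < φ x ^ a * φ y ^ c :=
      mul_pos (Real.rpow_pos_of_pos hx a) (Real.rpow_pos_of_pos hy c)
    exact lt_of_lt_of_le hp h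
  set ψ : EuclideanSpace ℝ (Fin n) → ℝ := fun x => - Real.log (φ x) with hψdef
  have hψconv : ConvexOn ℝ S ψ := by
    refine ⟨hSconv, fun x hx y hy a c ha hc hac => ?_⟩
    have h := hφlc x y a c ha hc hac
    have hpx : 0 < φ x ^ a := Real.rpow_pos_of_pos hx a
    have hpy : 0 < φ y ^ c := Real.rpow_pos_of_pos hy c
    have hlog := Real.log_le_log (mul_pos hpx hpy) h
    rw [Real.log_mul (ne_of_gt hpx) (ne_of_gt hpy), Real.log_rpow hx, Real.log_rpow hy] at hlog
    simp only [hψdef, smul_eq_mul]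
    linarith
  have hSne : S.Nonempty := by
    by_contra h
    rw [Set.not_nonempty_iff_eq_empty] at h
    have hz : ∀ x, φ x = 0 := by
      intro x
      have hx : x ∉ S := by rw [h]; exact Set.notMem_empty x
      have hx2 : ¬ 0 < φ x := hx
      linarith [hφ0 x]
    have hIz : I = 0 := by
      have hfz : (fun x => φ x) = fun _ => (0:ℝ) := funext hz
      rw [hIdef, hfz, integral_zero]
    linarith
  obtain ⟨u₀, c₀, hmin⟩ := exists_affine_minorant hSconv hSne hψconv
  have hent : Integrable (fun x => φ x * Real.log (φ x)) μ := by
    set A : EuclideanSpace ℝ (Fin n) → ℝ := fun x => φ x * (-c₀) + (-(u₀ (φ x • x))) with hA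
    have hub : ∀ x, φ x * Real.log (φ x) ≤ A x := by
      intro x
      by_cases hx : 0 < φ x
      · have h1 := hmin x hx
        have hlog : Real.log (φ x) ≤ -c₀ - u₀ x := by
          simp only [hψdef] at h1
          linarith
        have h2 : u₀ (φ x • x) = φ x * u₀ x := by
          rw [u₀.map_smul]
          simp [smul_eq_mul]
        have h3 := mul_le_mul_of_nonneg_left hlog (hφ0 x)
        simp only [hA]
        rw [h2]
        nlinarith
      · have h0 : φ x = 0 := le_antisymm (not_lt.mp hx) (hφ0 x)
        simp [hA, h0]
    have hlb : ∀ x, φ x - 1 ≤ φ x * Real.log (φ x) := by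
      intro x
      by_cases hx : 0 < φ x
      · have h1 := Real.log_le_sub_one_of_pos (inv_pos.mpr hx)
        rw [Real.log_inv] at h1
        have h2 : 1 - (φ x)⁻¹ ≤ Real.log (φ x) := by linarith
        have h3 := mul_le_mul_of_nonneg_left h2 (hφ0 x)
        have h4 : φ x * (1 - (φ x)⁻¹) = φ x - 1 := by field_simp
        linarith
      · have h0 : φ x = 0 := le_antisymm (not_lt.mp hx) (hφ0 x)
        simp [h0]
    have hAi : Integrable A μ := by
      apply Integrable.add
      · exact hφi.mul_const _
      · exact (u₀.integrable_comp hxi).neg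
    have hBi : Integrable (fun x => φ x - 1) μ := hφi.sub (integrable_const _)
    apply Integrable.mono' (hAi.abs.add hBi.abs)
    · exact (hφi.1.aemeasurable.mul
        (Real.measurable_log.comp_aemeasurable hφi.1.aemeasurable)).aestronglyMeasurable
    · refine Filter.Eventually.of_forall fun x => ?_
      have h1 := hub x
      have h2 := hlb x
      simp only [Pi.add_apply]
      rw [Real.norm_eq_abs, abs_le]
      constructor
      · have h5 := neg_abs_le (φ x - 1)
        have h6 := abs_nonneg (A x)
        linarith
      · have h5 := le_abs_self (A x)
        have h6 := abs_nonneg (φ x - 1)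
        linarith
  have hmk : AEMeasurable φ μ := hφi.1.aemeasurable
  set g : EuclideanSpace ℝ (Fin n) → ℝ := hmk.mk φ with hgdef
  have hgm : Measurable g := hmk.measurable_mk
  have hgφ : φ =ᵐ[μ] g := hmk.ae_eq_mk
  set ρ : EuclideanSpace ℝ (Fin n) → ℝ≥0 := fun x => Real.toNNReal (I⁻¹ * g x) with hρdef
  have hρm : Measurable ρ := (measurable_const.mul hgm).real_toNNReal
  set ν : Measure (EuclideanSpace ℝ (Fin n)) :=
    μ.withDensity (fun x => (ρ x : ℝ≥0∞)) with hνdef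
  have hρφ : (fun x => (ρ x : ℝ)) =ᵐ[μ] fun x => I⁻¹ * φ x := by
    filter_upwards [hgφ] with x hx
    simp only [hρdef, Real.coe_toNNReal', ← hx]
    exact max_eq_left (mul_nonneg (inv_nonneg.mpr hI.le) (hφ0 x))
  have hiρ : Integrable (fun x => (ρ x : ℝ)) μ :=
    (hφi.const_mul I⁻¹).congr hρφ.symm
  have hνprob : IsProbabilityMeasure ν := by
    constructor
    rw [hνdef, withDensity_apply _ MeasurableSet.univ, Measure.restrict_univ]
    have h0 : ∫ x, (ρ x : ℝ) ∂μ = 1 := by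
      rw [integral_congr_ae hρφ, integral_const_mul, ← hIdef]
      exact inv_mul_cancel₀ (ne_of_gt hI)
    have h3 := ofReal_integral_eq_lintegral_ofReal hiρ
      (Filter.Eventually.of_forall fun x => (ρ x).coe_nonneg)
    rw [h0] at h3
    calc ∫⁻ x, (ρ x : ℝ≥0∞) ∂μ = ∫⁻ x, ENNReal.ofReal ((ρ x : ℝ)) ∂μ :=
          lintegral_congr fun x => (ENNReal.ofReal_coe_nnreal (p := ρ x)).symm
      _ = ENNReal.ofReal 1 := h3.symm
      _ = 1 := by simp
  haveI := hνprob
  have habs : ν ≪ μ := by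
    rw [hνdef]
    exact withDensity_absolutelyContinuous μ _
  have hmemν : ∀ᵐ x ∂ν, x ∈ S := by
    have hmeas : MeasurableSet {x | I⁻¹ * g x ≤ 0} :=
      measurableSet_le (measurable_const.mul hgm) measurable_const
    have h1 : ν {x | I⁻¹ * g x ≤ 0} = 0 := by
      rw [hνdef, withDensity_apply _ hmeas]
      have h2 : ∀ᵐ x ∂(μ.restrict {x | I⁻¹ * g x ≤ 0}), (ρ x : ℝ≥0∞) = 0 := by
        refine (ae_restrict_iff' hmeas).mpr (Filter.Eventually.of_forall fun x hx => ?_)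
        rw [ENNReal.coe_eq_zero]
        exact Real.toNNReal_of_nonpos hx
      rw [lintegral_congr_ae h2, lintegral_zero]
    have h2 : ∀ᵐ x ∂ν, ¬ (I⁻¹ * g x ≤ 0) := by
      rw [ae_iff]
      simpa only [not_not] using h1
    have h4 : ∀ᵐ x ∂ν, φ x = g x := habs.ae_eq hgφ
    filter_upwards [h2, h4] with x hx1 hx2
    show 0 < φ x
    rw [hx2]
    by_contra hcon
    push_neg at hcon
    exact hx1 (by nlinarith [inv_nonneg.mpr hI.le])
  have hidν : Integrable (fun x => x) ν := by
    rw [hνdef, integrable_withDensity_iff_integrable_smul hρm]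
    have h5 : Integrable (fun x => I⁻¹ • (φ x • x)) μ := Integrable.smul I⁻¹ hxi
    apply h5.congr
    filter_upwards [hρφ] with x hx
    rw [NNReal.smul_def, hx, smul_smul]
  have hbary : ∫ x, x ∂ν = I⁻¹ • ∫ x, φ x • x ∂μ := by
    rw [hνdef, integral_withDensity_eq_integral_smul hρm]
    have h6 : (fun x => ρ x • x) =ᵐ[μ]
        fun x : EuclideanSpace ℝ (Fin n) => I⁻¹ • (φ x • x) := by
      filter_upwards [hρφ] with x hx
      rw [NNReal.smul_def, hx, smul_smul]
    rw [integral_congr_ae h6, integral_smul]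
  have hψν : Integrable ψ ν := by
    rw [hνdef, integrable_withDensity_iff_integrable_smul hρm]
    have h8 : Integrable (fun x => φ x * ψ x) μ := by
      have h9 : (fun x => φ x * ψ x) = fun x => -(φ x * Real.log (φ x)) := by
        funext x
        simp only [hψdef]
        ring
      rw [h9]
      exact hent.neg
    have h7 : Integrable (fun x => I⁻¹ • (φ x • ψ x)) μ := Integrable.smul I⁻¹ h8
    apply h7.congr
    filter_upwards [hρφ] with x hx
    rw [NNReal.smul_def, hx, smul_smul]
  obtain ⟨hbS, hJ⟩ := jensen_barycenter ν (Module.finrank ℝ (vectorSpan ℝ S)) S ψ le_rfl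
    hSconv hmemν hψconv hidν hψν
  rw [hbary] at hbS hJ
  have hφb : 0 < φ (I⁻¹ • ∫ x, φ x • x ∂μ) := hbS
  have hintψ : ∫ x, ψ x ∂ν = I⁻¹ * (- ∫ x, φ x * Real.log (φ x) ∂μ) := by
    rw [hνdef, integral_withDensity_eq_integral_smul hρm]
    have h9 : (fun x => ρ x • ψ x) =ᵐ[μ] fun x => I⁻¹ * (-(φ x * Real.log (φ x))) := by
      filter_upwards [hρφ] with x hx
      rw [NNReal.smul_def, hx]
      simp only [hψdef, smul_eq_mul]
      ring
    rw [integral_congr_ae h9, integral_const_mul, integral_neg]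
  have hJ1 : I * Real.log I ≤ ∫ x, φ x * Real.log (φ x) ∂μ := by
    have hpt : ∀ x, I * Real.log I + (Real.log I + 1) * (φ x - I) ≤ φ x * Real.log (φ x) := by
      intro x
      by_cases hx : 0 < φ x
      · have h1 := Real.log_le_sub_one_of_pos (div_pos hI hx)
        rw [Real.log_div (ne_of_gt hI) (ne_of_gt hx)] at h1
        have h2 := mul_le_mul_of_nonneg_left h1 (hφ0 x)
        have h3 : φ x * (I / φ x - 1) = I - φ x := by field_simp
        rw [h3] at h2
        nlinarith [h2]
      · have h0 : φ x = 0 := le_antisymm (not_lt.mp hx) (hφ0 x)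
        rw [h0]
        have h4 : I * Real.log I + (Real.log I + 1) * (0 - I) = -I := by ring
        rw [h4]
        simp
        linarith
    have hlhsInt : Integrable (fun x => I * Real.log I + (Real.log I + 1) * (φ x - I)) μ :=
      (integrable_const _).add ((hφi.sub (integrable_const _)).const_mul _)
    have hmono := integral_mono hlhsInt hent hpt
    have hc1 : Integrable (fun x => φ x - I) μ := hφi.sub (integrable_const _)
    have hc2 : Integrable (fun x => (Real.log I + 1) * (φ x - I)) μ := hc1.const_mul _
    have hcomp : ∫ x, (I * Real.log I + (Real.log I + 1) * (φ x - I)) ∂μ = I * Real.log I := by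
      rw [integral_add (integrable_const _) hc2,
        integral_const, probReal_univ, one_smul, integral_const_mul,
        integral_sub hφi (integrable_const _), integral_const, probReal_univ, one_smul, ← hIdef, sub_self, mul_zero, add_zero]
    rw [hcomp] at hmono
    exact hmono
  rw [hintψ] at hJ
  have hJ' : Real.log I ≤ Real.log (φ (I⁻¹ • ∫ x, φ x • x ∂μ)) := by
    have h10 : ψ (I⁻¹ • ∫ x, φ x • x ∂μ)
        = - Real.log (φ (I⁻¹ • ∫ x, φ x • x ∂μ)) := rfl
    rw [h10] at hJ
    have h11 := mul_le_mul_of_nonneg_left hJ hI.le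
    have h12 : I * (I⁻¹ * (- ∫ x, φ x * Real.log (φ x) ∂μ))
        = - ∫ x, φ x * Real.log (φ x) ∂μ := by
      field_simp
    rw [h12] at h11
    have h13 : I * Real.log I ≤ I * Real.log (φ (I⁻¹ • ∫ x, φ x • x ∂μ)) := by nlinarith
    exact le_of_mul_le_mul_left h13 hI
  calc I = Real.exp (Real.log I) := (Real.exp_log hI).symm
    _ ≤ Real.exp (Real.log (φ (I⁻¹ • ∫ x, φ x • x ∂μ))) := Real.exp_le_exp.mpr hJ'
    _ = φ (I⁻¹ • ∫ x, φ x • x ∂μ) := Real.exp_log hφb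

theorem stmt17 {n : ℕ} (μ : Measure (EuclideanSpace ℝ (Fin n))) [IsProbabilityMeasure μ]
    (φ : EuclideanSpace ℝ (Fin n) → ℝ) (hφ0 : ∀ x, 0 ≤ φ x)
    (hφlc : ∀ x y : EuclideanSpace ℝ (Fin n), ∀ a b : ℝ, 0 ≤ a → 0 ≤ b → a + b = 1 →
      φ x ^ a * φ y ^ b ≤ φ (a • x + b • y))
    (hφi : Integrable φ μ) (hφpos : 0 < ∫ x, φ x ∂μ)
    (hxi : Integrable (fun x => φ x • x) μ) :
    ∫ x, φ x ∂μ ≤ φ ((∫ x, φ x ∂μ)⁻¹ • ∫ x, φ x • x ∂μ) := stmt17' μ φ hφ0 hφlc hφi hφpos hxi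
end
end
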